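/- arXiv:1312.3834 — 8 statements merged into one kernel-verified Lean document; each statement's English description precedes it below -/
import Mathlib

section
/- Let τ be a polyhedral cone in ℝ^n and {v_i : i ∈ ℕ} a sequence in τ. Then there exists a face σ of τ and a subsequence {u_j} of {v_i} such that σ is the minimum face of boundedness of every subsequence of {u_j}. -/
/-!
Pass to a subsequence along which every defining functional `φ ∈ Ψ` either stays bounded or
tends to `+∞`, and let `σ` be the face cut out by the bounded ones. A functional vanishing on `σ`
and its negative are both nonnegative on the cone `{φ ≥ 0 (φ ∈ Ψ), φ ≤ 0 (φ bounded)}`, so by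
Farkas' lemma both are nonnegative combinations of functionals that are bounded below along the
subsequence; hence every further subsequence is `σ`-bounded. Conversely a face on which some
functional tending to `+∞` vanishes cannot bound any further subsequence.
-/

open Filter

/-- The polyhedral cone in `ℝ^n` defined by a finite set `Ψ` of linear functionals. -/
def polyCone (n : ℕ) (Ψ : Finset ((Fin n → ℝ) →ₗ[ℝ] ℝ)) : Set (Fin n → ℝ) :=
  {x | ∀ ψ ∈ Ψ, 0 ≤ ψ x}

/-- The face of the polyhedral cone `polyCone n Ψ` cut out by a subset `S ⊆ Ψ` of the
defining functionals. -/
def polyFace (n : ℕ) (Ψ S : Finset ((Fin n → ℝ) →ₗ[ℝ] ℝ)) : Set (Fin n → ℝ) :=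
  {x | (∀ ψ ∈ Ψ, 0 ≤ ψ x) ∧ ∀ ψ ∈ S, ψ x = 0}

/-- A sequence is `σ`-bounded if every linear functional vanishing on `σ` is bounded on
the sequence. -/
def SigmaBounded (n : ℕ) (σ : Set (Fin n → ℝ)) (v : ℕ → (Fin n → ℝ)) : Prop :=
  ∀ ψ : (Fin n → ℝ) →ₗ[ℝ] ℝ, (∀ x ∈ σ, ψ x = 0) → ∃ M : ℝ, ∀ i, |ψ (v i)| ≤ M

open Set

namespace PointedCone

variable {𝕜 E : Type*} [Field 𝕜] [LinearOrder 𝕜] [IsStrictOrderedRing 𝕜]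
  [AddCommGroup E] [Module 𝕜 E]

lemma mem_hull_finset_iff {s : Finset E} {x : E} :
    x ∈ hull 𝕜 (s : Set E) ↔ ∃ c : E → 𝕜, (∀ y ∈ s, 0 ≤ c y) ∧ ∑ y ∈ s, c y • y = x := by
  constructor
  · rw [Submodule.mem_span_finset]
    rintro ⟨f, -, rfl⟩
    exact ⟨fun y ↦ f y, fun y _ ↦ (f y).2, rfl⟩
  · rintro ⟨c, hc, rfl⟩
    exact sum_mem fun y hy ↦ smul_mem _ (hc y hy) (subset_hull hy)

/-- The conic analogue of `Caratheodory.mem_convexHull_erase`: subtract a multiple of a linear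
relation until the first coefficient vanishes. -/
lemma mem_hull_erase [DecidableEq E] {t : Finset E} (ht : ¬LinearIndepOn 𝕜 id (t : Set E))
    {x : E} (hx : x ∈ hull 𝕜 (t : Set E)) : ∃ y ∈ t, x ∈ hull 𝕜 (t.erase y : Set E) := by
  obtain ⟨c, hc, rfl⟩ := mem_hull_finset_iff.1 hx
  obtain ⟨g, hg, i, hi, hgi⟩ := not_linearIndepOn_finset_iff.1 ht
  simp only [id] at hg
  wlog hpos : ∃ j ∈ t, 0 < g j generalizing g
  · refine this (-g) (neg_ne_zero.2 hgi) (by simp [hg]) ⟨i, hi, ?_⟩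
    push Not at hpos
    exact neg_pos.2 ((hpos i hi).lt_of_ne hgi)
  obtain ⟨y, hy, hmin⟩ := (t.filter (0 < g ·)).exists_min_image (fun z ↦ c z / g z)
    (by obtain ⟨j, hj, hgj⟩ := hpos; exact ⟨j, Finset.mem_filter.2 ⟨hj, hgj⟩⟩)
  obtain ⟨hyt, hgy⟩ := Finset.mem_filter.1 hy
  set r := c y / g y
  refine ⟨y, hyt, mem_hull_finset_iff.2 ⟨fun z ↦ c z - r * g z, fun z hz ↦ ?_, ?_⟩⟩
  · have hzt := Finset.mem_of_mem_erase hz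
    rcases lt_or_ge 0 (g z) with hgz | hgz
    · linarith [(le_div_iff₀ hgz).1 (hmin z (Finset.mem_filter.2 ⟨hzt, hgz⟩))]
    · nlinarith [hc z hzt, div_nonneg (hc y hyt) hgy.le]
  · rw [Finset.sum_erase _ (by simp [r, hgy.ne'])]
    simp only [sub_smul, mul_smul, Finset.sum_sub_distrib, ← Finset.smul_sum, hg, smul_zero,
      sub_zero]

lemma hull_finset_eq_image (t : Finset E) :
    (hull 𝕜 (t : Set E) : Set E) = Fintype.linearCombination 𝕜 ((↑) : t → E) '' Ici 0 := by
  ext x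
  simp only [SetLike.mem_coe, Submodule.mem_span_finset', mem_image, mem_Ici,
    Fintype.linearCombination_apply]
  constructor
  · rintro ⟨f, rfl⟩
    exact ⟨fun y ↦ f y, fun y ↦ (f y).2, rfl⟩
  · rintro ⟨c, hc, rfl⟩
    exact ⟨fun y ↦ ⟨c y, hc y⟩, rfl⟩

theorem exists_subset_linearIndepOn_mem_hull {s : Finset E} {x : E}
    (hx : x ∈ hull 𝕜 (s : Set E)) :
    ∃ t ⊆ s, LinearIndepOn 𝕜 id (t : Set E) ∧ x ∈ hull 𝕜 (t : Set E) := by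
  classical
  induction s using Finset.strongInduction with
  | H s ih =>
    by_cases hs : LinearIndepOn 𝕜 id (s : Set E)
    · exact ⟨s, subset_rfl, hs, hx⟩
    · obtain ⟨y, hy, hxy⟩ := mem_hull_erase hs hx
      obtain ⟨t, hts, ht, hxt⟩ := ih _ (Finset.erase_ssubset hy) hxy
      exact ⟨t, hts.trans (Finset.erase_subset _ _), ht, hxt⟩

section Topology

variable {E : Type*} [AddCommGroup E] [Module ℝ E] [TopologicalSpace E] [IsTopologicalAddGroup E]
  [ContinuousSMul ℝ E] [T2Space E]

lemma isClosed_hull_of_linearIndepOn {t : Finset E} (ht : LinearIndepOn ℝ id (t : Set E)) :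
    IsClosed (hull ℝ (t : Set E) : Set E) := by
  rw [hull_finset_eq_image]
  exact (LinearMap.isClosedEmbedding_of_injective (LinearMap.ker_eq_bot.2
    ht.fintypeLinearCombination_injective)).isClosedMap _ isClosed_Ici

theorem isClosed_hull_finset (s : Finset E) : IsClosed (hull ℝ (s : Set E) : Set E) := by
  classical
  have : (hull ℝ (s : Set E) : Set E) =
      ⋃ t ∈ s.powerset.filter fun t : Finset E ↦ LinearIndepOn ℝ id (t : Set E),
        (hull ℝ (t : Set E) : Set E) := by
    refine Subset.antisymm (fun x hx ↦ ?_) (iUnion₂_subset fun t ht ↦ ?_)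
    · obtain ⟨t, hts, ht, hxt⟩ := exists_subset_linearIndepOn_mem_hull hx
      exact mem_biUnion (by simpa using ⟨hts, ht⟩) hxt
    · exact Submodule.span_mono (by simpa using (Finset.mem_filter.1 ht).1)
  rw [this]
  exact isClosed_biUnion_finset fun t ht ↦ isClosed_hull_of_linearIndepOn (Finset.mem_filter.1 ht).2

end Topology

/-- **Farkas' lemma**, from the bipolar theorem for the cone `hull A`, which is closed. -/
theorem mem_hull_of_forall_nonneg {V : Type*} [NormedAddCommGroup V] [NormedSpace ℝ V]
    [FiniteDimensional ℝ V] {A : Finset (V →ₗ[ℝ] ℝ)} {ψ : V →ₗ[ℝ] ℝ}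
    (h : ∀ x, (∀ a ∈ A, 0 ≤ a x) → 0 ≤ ψ x) : ψ ∈ hull ℝ (A : Set (V →ₗ[ℝ] ℝ)) := by
  classical
  let e : (V →ₗ[ℝ] ℝ) ≃ₗ[ℝ] StrongDual ℝ V := LinearMap.toContinuousLinearMap
  let C : ProperCone ℝ (StrongDual ℝ V) := ⟨hull ℝ (A.image e : Set _), isClosed_hull_finset _⟩
  have hψ : e ψ ∈ hull ℝ (A.image e : Set _) := by
    change e ψ ∈ C
    rw [← ProperCone.dual_flip_dual (topDualPairing ℝ V) C]
    intro x hx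
    exact h x fun a ha ↦ hx (subset_hull (Finset.mem_image_of_mem e ha))
  rw [Finset.coe_image] at hψ
  simpa [Set.image_image] using Submodule.image_span_subset_span
    (e.symm.toLinearMap.restrictScalars {c : ℝ // 0 ≤ c}) _ (mem_image_of_mem _ hψ)

end PointedCone

lemma bddBelow_range_of_mem_hull {V ι : Type*} [AddCommGroup V] [Module ℝ V]
    {A : Set (V →ₗ[ℝ] ℝ)} {u : ι → V} (hA : ∀ a ∈ A, BddBelow (range fun i ↦ a (u i)))
    {ψ : V →ₗ[ℝ] ℝ} (hψ : ψ ∈ PointedCone.hull ℝ A) : BddBelow (range fun i ↦ ψ (u i)) := by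
  induction hψ using Submodule.span_induction with
  | mem a ha => exact hA a ha
  | zero => exact ⟨0, forall_mem_range.2 fun _ ↦ le_rfl⟩
  | add φ φ' _ _ hφ hφ' =>
    obtain ⟨m, hm⟩ := hφ
    obtain ⟨m', hm'⟩ := hφ'
    exact ⟨m + m', forall_mem_range.2 fun i ↦
      add_le_add (hm (mem_range_self i)) (hm' (mem_range_self i))⟩
  | smul c φ _ hφ =>
    obtain ⟨m, hm⟩ := hφ
    exact ⟨c * m, forall_mem_range.2 fun i ↦
      mul_le_mul_of_nonneg_left (hm (mem_range_self i)) c.2⟩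

theorem exists_strictMono_bddAbove_or_tendsto_atTop (x : ℕ → ℝ) :
    ∃ g : ℕ → ℕ, StrictMono g ∧
      (BddAbove (range (x ∘ g)) ∨ Tendsto (x ∘ g) atTop atTop) := by
  by_cases hx : Tendsto x atTop atTop
  · exact ⟨id, strictMono_id, .inr hx⟩
  · obtain ⟨M, hM⟩ : ∃ M, ∃ᶠ i in atTop, x i < M := by
      simpa [tendsto_atTop, frequently_atTop] using hx
    obtain ⟨g, hg, hgM⟩ := extraction_of_frequently_atTop hM
    exact ⟨g, hg, .inl ⟨M, forall_mem_range.2 fun i ↦ (hgM i).le⟩⟩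

theorem exists_strictMono_forall_bddAbove_or_tendsto_atTop {ι : Type*} (s : Finset ι)
    (x : ι → ℕ → ℝ) : ∃ g : ℕ → ℕ, StrictMono g ∧
      ∀ i ∈ s, BddAbove (range (x i ∘ g)) ∨ Tendsto (x i ∘ g) atTop atTop := by
  classical
  induction s using Finset.induction_on with
  | empty => exact ⟨id, strictMono_id, by simp⟩
  | insert i s _ ih =>
    obtain ⟨g, hg, hgs⟩ := ih
    obtain ⟨h, hh, hhi⟩ := exists_strictMono_bddAbove_or_tendsto_atTop (x i ∘ g)
    refine ⟨g ∘ h, hg.comp hh, (Finset.forall_mem_insert ..).2 ⟨hhi, fun j hj ↦ ?_⟩⟩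
    exact (hgs j hj).imp (fun hb ↦ hb.mono (range_comp_subset_range h (x j ∘ g)))
      (fun ht ↦ ht.comp hh.tendsto_atTop)

section Faces

variable {n : ℕ} {Ψ S T : Finset ((Fin n → ℝ) →ₗ[ℝ] ℝ)}

lemma polyFace_anti (h : T ⊆ S) : polyFace n Ψ S ⊆ polyFace n Ψ T :=
  fun _ hx ↦ ⟨hx.1, fun φ hφ ↦ hx.2 φ (h hφ)⟩

theorem sigmaBounded_polyFace (hSΨ : S ⊆ Ψ) {u : ℕ → Fin n → ℝ} (hu : ∀ i, u i ∈ polyCone n Ψ)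
    (hS : ∀ φ ∈ S, BddAbove (range fun i ↦ φ (u i))) : SigmaBounded n (polyFace n Ψ S) u := by
  classical
  have hface (x : Fin n → ℝ) (hx : ∀ a ∈ Ψ ∪ S.image Neg.neg, 0 ≤ a x) : x ∈ polyFace n Ψ S := by
    simp only [Finset.forall_mem_union, Finset.forall_mem_image, LinearMap.neg_apply,
      neg_nonneg] at hx
    exact ⟨hx.1, fun φ hφ ↦ le_antisymm (hx.2 hφ) (hx.1 φ (hSΨ hφ))⟩
  have hA : ∀ a ∈ Ψ ∪ S.image Neg.neg, BddBelow (range fun i ↦ a (u i)) := by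
    simp only [Finset.forall_mem_union, Finset.forall_mem_image, LinearMap.neg_apply]
    refine ⟨fun φ hφ ↦ ⟨0, forall_mem_range.2 fun i ↦ hu i φ hφ⟩, fun φ hφ ↦ ?_⟩
    obtain ⟨M, hM⟩ := hS φ hφ
    exact ⟨-M, forall_mem_range.2 fun i ↦ neg_le_neg (hM (mem_range_self i))⟩
  have hbdd (χ : (Fin n → ℝ) →ₗ[ℝ] ℝ) (hχ : ∀ x ∈ polyFace n Ψ S, χ x = 0) :
      BddBelow (range fun i ↦ χ (u i)) :=
    bddBelow_range_of_mem_hull hA <| PointedCone.mem_hull_of_forall_nonneg fun x hx ↦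
      (hχ x (hface x hx)).ge
  intro ψ hψ
  obtain ⟨m, hm⟩ := hbdd ψ hψ
  obtain ⟨m', hm'⟩ := hbdd (-ψ) (by simpa using hψ)
  refine ⟨max (-m) (-m'), fun i ↦ abs_le.2 ⟨?_, ?_⟩⟩
  · linarith [hm (mem_range_self i), le_max_left (-m) (-m')]
  · have := hm' (mem_range_self i)
    rw [LinearMap.neg_apply] at this
    linarith [le_max_right (-m) (-m')]

lemma SigmaBounded.bddAbove_range {u : ℕ → Fin n → ℝ} (h : SigmaBounded n (polyFace n Ψ T) u)
    {φ : (Fin n → ℝ) →ₗ[ℝ] ℝ} (hφ : φ ∈ T) : BddAbove (range fun i ↦ φ (u i)) := by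
  obtain ⟨M, hM⟩ := h φ fun x hx ↦ hx.2 φ hφ
  exact ⟨M, forall_mem_range.2 fun i ↦ (le_abs_self _).trans (hM i)⟩

end Faces

/-- Given a sequence in a polyhedral cone `τ`, there is a face `σ` of `τ` and a
subsequence such that `σ` is the minimum face of boundedness of every subsequence of
that subsequence. -/
theorem exists_subseq_with_min_face_of_boundedness (n : ℕ)
    (Ψ : Finset ((Fin n → ℝ) →ₗ[ℝ] ℝ)) (v : ℕ → (Fin n → ℝ))
    (hv : ∀ i, v i ∈ polyCone n Ψ) :
    ∃ (S : Finset ((Fin n → ℝ) →ₗ[ℝ] ℝ)), S ⊆ Ψ ∧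
      ∃ g : ℕ → ℕ, StrictMono g ∧
        ∀ h : ℕ → ℕ, StrictMono h →
          SigmaBounded n (polyFace n Ψ S) (v ∘ g ∘ h) ∧
          ∀ T : Finset ((Fin n → ℝ) →ₗ[ℝ] ℝ), T ⊆ Ψ →
            SigmaBounded n (polyFace n Ψ T) (v ∘ g ∘ h) →
            polyFace n Ψ S ⊆ polyFace n Ψ T := by
  classical
  obtain ⟨g, hg, hdich⟩ := exists_strictMono_forall_bddAbove_or_tendsto_atTop Ψ fun φ i ↦ φ (v i)
  refine ⟨Ψ.filter fun φ ↦ BddAbove (range fun j ↦ φ (v (g j))), Finset.filter_subset _ _, g, hg,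
    fun h hh ↦ ⟨?_, fun T hTΨ hT ↦ polyFace_anti fun φ hφ ↦ ?_⟩⟩
  · exact sigmaBounded_polyFace (Finset.filter_subset _ _) (fun i ↦ hv _) fun φ hφ ↦
      (Finset.mem_filter.1 hφ).2.mono (range_comp_subset_range h fun j ↦ φ (v (g j)))
  · refine Finset.mem_filter.2 ⟨hTΨ hφ, (hdich φ (hTΨ hφ)).resolve_right fun htop ↦ ?_⟩
    exact not_isBoundedUnder_of_tendsto_atTop (htop.comp hh.tendsto_atTop)
      (hT.bddAbove_range hφ).isBoundedUnder_of_range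
end

section
/- If a sequence {v_i} in a polyhedral cone τ ⊂ ℝ^n is both σ-bounded and ρ-bounded for faces σ, ρ of τ, then it is (σ ∩ ρ)-bounded. -/
/-!
A functional `ψ` vanishing on `σ ∩ ρ` is nonnegative on the polyhedral cone cut out by `Ψ` and
by `±φ` for `φ ∈ S ∪ T`, and so is `-ψ`. By Farkas' lemma both are nonnegative combinations of
these functionals. Along `v` the functionals of `Ψ` are nonnegative and each `±φ` is bounded,
by `σ`- resp. `ρ`-boundedness, so `ψ` is bounded below and above.
-/

open PointedCone

section Projection

variable {𝕜 E : Type*} [Field 𝕜] [AddCommGroup E] [Module 𝕜 E]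

/-- The projection onto `ker φ` along `x₀` (when `φ x₀ ≠ 0`). -/
def projAlong (φ : Module.Dual 𝕜 E) (x₀ : E) : E →ₗ[𝕜] E :=
  LinearMap.id - (φ x₀)⁻¹ • φ.smulRight x₀

lemma comp_projAlong (φ g : Module.Dual 𝕜 E) (x₀ : E) :
    g ∘ₗ projAlong φ x₀ = g - (g x₀ / φ x₀) • φ := by
  ext x
  simp only [projAlong, LinearMap.comp_apply, LinearMap.sub_apply, LinearMap.smul_apply,
    LinearMap.id_apply, LinearMap.smulRight_apply, map_sub, map_smul, smul_eq_mul]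
  ring

lemma apply_projAlong_self {φ : Module.Dual 𝕜 E} {x₀ : E} (h : φ x₀ ≠ 0) (x : E) :
    φ (projAlong φ x₀ x) = 0 := by
  rw [← LinearMap.comp_apply, comp_projAlong, div_self h, one_smul, sub_self,
    LinearMap.zero_apply]

end Projection

section Farkas

variable {𝕜 E : Type*} [Field 𝕜] [LinearOrder 𝕜] [IsStrictOrderedRing 𝕜]
  [AddCommGroup E] [Module 𝕜 E]

lemma nonneg_of_mem_hull {s : Set (Module.Dual 𝕜 E)} {x : E} (hs : ∀ φ ∈ s, 0 ≤ φ x)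
    {g : Module.Dual 𝕜 E} (hg : g ∈ hull 𝕜 s) : 0 ≤ g x := by
  have : hull 𝕜 s ≤ PointedCone.dual (Module.Dual.eval 𝕜 E) {x} :=
    Submodule.span_le.mpr fun φ hφ => by simpa using hs φ hφ
  simpa using this hg

/-- **Farkas' lemma** for finitely many functionals, in an arbitrary vector space. -/
theorem mem_hull_range_of_forall_nonneg {n : ℕ} (φ : Fin n → Module.Dual 𝕜 E)
    {f : Module.Dual 𝕜 E} (h : ∀ x, (∀ i, 0 ≤ φ i x) → 0 ≤ f x) :
    f ∈ hull 𝕜 (Set.range φ) := by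
  induction n generalizing f with
  | zero =>
    have : f = 0 := LinearMap.ext fun x =>
      le_antisymm (by simpa using h (-x) finZeroElim) (h x finZeroElim)
    exact this ▸ zero_mem _
  | succ n ih =>
    rw [← Fin.cons_self_tail φ, Fin.range_cons]
    set φ₀ := φ 0
    set ψ := Fin.tail φ
    have h' : ∀ x, 0 ≤ φ₀ x → (∀ i, 0 ≤ ψ i x) → 0 ≤ f x := fun x h₀ hψ =>
      h x (Fin.cases h₀ hψ)
    by_cases hψf : ∀ x, (∀ i, 0 ≤ ψ i x) → 0 ≤ f x
    · exact Submodule.span_mono (Set.subset_insert _ _) (ih ψ hψf)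
    -- Project along a witness `x₀` onto `ker φ₀` and apply induction; the resulting
    -- coefficient of `φ₀` is nonnegative since `f x₀ < 0 ≤ g x₀` and `φ₀ x₀ < 0`.
    push Not at hψf
    obtain ⟨x₀, hψx₀, hfx₀⟩ := hψf
    have hφ₀x₀ : φ₀ x₀ < 0 := lt_of_not_ge fun h₀ => hfx₀.not_ge (h' x₀ h₀ hψx₀)
    set P := projAlong φ₀ x₀
    have hP : P.dualMap f ∈ hull 𝕜 (Set.range fun i => P.dualMap (ψ i)) :=
      ih _ fun x hx => h' (P x) (apply_projAlong_self hφ₀x₀.ne x).ge hx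
    have hmap : hull 𝕜 (P.dualMap '' Set.range ψ) ≤ (hull 𝕜 (Set.range ψ)).map P.dualMap :=
      Submodule.span_le.mpr <| Set.image_mono Submodule.subset_span
    rw [Set.range_comp'] at hP
    obtain ⟨g, hg, hgf⟩ := PointedCone.mem_map.mp (hmap hP)
    have hgx₀ : 0 ≤ g x₀ := nonneg_of_mem_hull (by simpa using hψx₀) hg
    have hf : f = g + ((f x₀ - g x₀) / φ₀ x₀) • φ₀ := by
      rw [LinearMap.dualMap_apply', LinearMap.dualMap_apply', comp_projAlong,
        comp_projAlong] at hgf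
      linear_combination (norm := module) -hgf
    rw [hf]
    exact add_mem (Submodule.span_mono (Set.subset_insert _ _) hg)
      (smul_mem _ (div_nonneg_of_nonpos (by linarith) hφ₀x₀.le)
        (Submodule.subset_span (Set.mem_insert _ _)))

theorem mem_hull_of_forall_nonneg {s : Set (Module.Dual 𝕜 E)} (hs : s.Finite)
    {f : Module.Dual 𝕜 E} (h : ∀ x, (∀ φ ∈ s, 0 ≤ φ x) → 0 ≤ f x) : f ∈ hull 𝕜 s := by
  obtain ⟨n, φ, -, rfl⟩ := hs.fin_param
  exact mem_hull_range_of_forall_nonneg φ fun x hx => h x (Set.forall_mem_range.mpr hx)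

theorem mem_lineal_hull_of_forall_eq_zero {s : Set (Module.Dual 𝕜 E)} (hs : s.Finite)
    {f : Module.Dual 𝕜 E} (h : ∀ x, (∀ φ ∈ s, 0 ≤ φ x) → f x = 0) : f ∈ (hull 𝕜 s).lineal :=
  ⟨mem_hull_of_forall_nonneg hs fun x hx => (h x hx).ge,
    mem_hull_of_forall_nonneg hs fun x hx => by simp [h x hx]⟩

end Farkas

section BoundedBelow

variable {𝕜 E ι : Type*} [Field 𝕜] [LinearOrder 𝕜] [IsStrictOrderedRing 𝕜]
  [AddCommGroup E] [Module 𝕜 E]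

def boundedBelowCone (v : ι → E) : PointedCone 𝕜 (Module.Dual 𝕜 E) where
  carrier := {f | ∃ M, ∀ i, M ≤ f (v i)}
  add_mem' := by
    rintro f g ⟨M, hM⟩ ⟨N, hN⟩
    exact ⟨M + N, fun i => add_le_add (hM i) (hN i)⟩
  zero_mem' := ⟨0, fun _ => le_rfl⟩
  smul_mem' := by
    rintro ⟨c, hc⟩ f ⟨M, hM⟩
    exact ⟨c * M, fun i => mul_le_mul_of_nonneg_left (hM i) hc⟩

lemma mem_lineal_boundedBelowCone_iff {v : ι → E} {f : Module.Dual 𝕜 E} :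
    f ∈ (boundedBelowCone v).lineal ↔ ∃ M, ∀ i, |f (v i)| ≤ M := by
  refine ⟨fun ⟨⟨M, hM⟩, ⟨N, hN⟩⟩ => ⟨max (-M) (-N), fun i => abs_le.mpr ⟨?_, ?_⟩⟩,
    fun ⟨M, hM⟩ => ⟨⟨-M, fun i => (abs_le.mp (hM i)).1⟩, ⟨-M, fun i => ?_⟩⟩⟩
  · linarith [le_max_left (-M) (-N), hM i]
  · have : N ≤ -f (v i) := hN i
    linarith [le_max_right (-M) (-N)]
  · have : f (v i) ≤ M := (abs_le.mp (hM i)).2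
    show -M ≤ -f (v i)
    linarith

end BoundedBelow

lemma mem_polyFace_inter_of_forall_nonneg {n : ℕ} {Ψ S T : Finset ((Fin n → ℝ) →ₗ[ℝ] ℝ)}
    {x : Fin n → ℝ}
    (hx : ∀ φ ∈ (↑Ψ ∪ ((↑S ∪ ↑T) ∪ -(↑S ∪ ↑T)) : Set ((Fin n → ℝ) →ₗ[ℝ] ℝ)), 0 ≤ φ x) :
    x ∈ polyFace n Ψ S ∩ polyFace n Ψ T := by
  have hΨ : ∀ φ ∈ Ψ, 0 ≤ φ x := fun φ h => hx φ (Or.inl h)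
  have hzero : ∀ φ ∈ (↑S ∪ ↑T : Set ((Fin n → ℝ) →ₗ[ℝ] ℝ)), φ x = 0 := fun φ h =>
    le_antisymm (by simpa using hx (-φ) (Or.inr (Or.inr (by simpa using h))))
      (hx φ (Or.inr (Or.inl h)))
  exact ⟨⟨hΨ, fun φ h => hzero φ (Or.inl h)⟩, ⟨hΨ, fun φ h => hzero φ (Or.inr h)⟩⟩

theorem sigmaBounded_inter_general (n : ℕ)
    (Ψ S T : Finset ((Fin n → ℝ) →ₗ[ℝ] ℝ))
    (v : ℕ → (Fin n → ℝ)) (hv : ∀ i, v i ∈ polyCone n Ψ)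
    (hSbdd : SigmaBounded n (polyFace n Ψ S) v)
    (hTbdd : SigmaBounded n (polyFace n Ψ T) v) :
    SigmaBounded n (polyFace n Ψ S ∩ polyFace n Ψ T) v := by
  intro ψ hψ
  set U : Set ((Fin n → ℝ) →ₗ[ℝ] ℝ) := ↑S ∪ ↑T
  have hU : ∀ φ ∈ U, φ ∈ (boundedBelowCone v).lineal := by
    rintro φ (h | h) <;> refine mem_lineal_boundedBelowCone_iff.mpr ?_
    exacts [hSbdd φ fun _ hx => hx.2 φ h, hTbdd φ fun _ hx => hx.2 φ h]
  have hgen : hull ℝ (↑Ψ ∪ (U ∪ -U)) ≤ boundedBelowCone v := by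
    refine Submodule.span_le.mpr ?_
    rintro φ (hφ | hφ | hφ)
    · exact ⟨0, fun i => hv i φ hφ⟩
    · exact (hU φ hφ).1
    · simpa using (hU (-φ) hφ).2
  have hfin : (↑Ψ ∪ (U ∪ -U)).Finite :=
    Ψ.finite_toSet.union <| (S.finite_toSet.union T.finite_toSet).union
      (S.finite_toSet.union T.finite_toSet).neg
  obtain ⟨hψpos, hψneg⟩ := mem_lineal_hull_of_forall_eq_zero hfin fun x hx =>
    hψ x (mem_polyFace_inter_of_forall_nonneg hx)
  exact mem_lineal_boundedBelowCone_iff.mp ⟨hgen hψpos, hgen hψneg⟩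

/-- If a sequence in a polyhedral cone `τ` is both `σ`-bounded and `ρ`-bounded for faces
`σ, ρ` of `τ`, then it is `(σ ∩ ρ)`-bounded. -/
theorem sigmaBounded_inter (n : ℕ)
    (Ψ S T : Finset ((Fin n → ℝ) →ₗ[ℝ] ℝ)) (hS : S ⊆ Ψ) (hT : T ⊆ Ψ)
    (v : ℕ → (Fin n → ℝ)) (hv : ∀ i, v i ∈ polyCone n Ψ)
    (hSbdd : SigmaBounded n (polyFace n Ψ S) v)
    (hTbdd : SigmaBounded n (polyFace n Ψ T) v) :
    SigmaBounded n (polyFace n Ψ S ∩ polyFace n Ψ T) v :=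
  sigmaBounded_inter_general n Ψ S T v hv hSbdd hTbdd
end

section
/- Let 𝒜 ⊂ ℝ^d be a finite set affinely spanning ℝ^d, λ ∈ ℝ^𝒜, and let 𝒮_λ be the regular subdivision of 𝒜 induced by λ (via upper faces of the lifted polytope P_λ = conv{(a, λ(a)) : a ∈ 𝒜}). If {a, b} ⊂ 𝒜 is not a subset of any face of 𝒮_λ, then there exist a facet 𝒢 of 𝒮_λ, coefficients β_a, β_b > 0 with β_a + β_b = 1, and coefficients α_g ≥ 0 for g ∈ 𝒢 with Σ α_g = 1, such that β_a·a + β_b·b = Σ_{g∈𝒢} α_g·g, and moreover β_a λ(a) + β_b λ(b) < Σ_{g∈𝒢} α_g λ(g). -/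
/-!
The midpoint `m` of `a` and `b` lies in `conv 𝒜`. Call an affine `h ≥ λ` on `𝒜` a facet majorant
if its contact set `{x ∈ 𝒜 | h x = λ x}` spans affinely; there are finitely many, since each is
determined by its contact set, and any majorant can be pivoted into one without increasing its
value at `m`. Take a facet majorant `h` minimising `h m`. If `m` were outside the convex hull of
its contact set `𝒢`, tilting `h` along a hyperplane separating `m` from `𝒢` would lower `h m`.
Hence `m = ∑ α_g g` over `g ∈ 𝒢`, and `∑ α_g λ(g) = h m = (h a + h b) / 2 > (λ a + λ b) / 2`
because `a` and `b` do not both lie in the face `𝒢`.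
-/

open Finset

/-- `F` is a face of the regular subdivision `𝒮_λ` of `𝒜` induced by `lam`: the points
of `𝒜` whose lifts lie on some upper face of the lifted polytope, i.e. those where an
affine function dominating `lam` on `𝒜` achieves equality. -/
def IsFaceOfRegSubdiv (d : ℕ) (A : Finset (Fin d → ℝ)) (lam : (Fin d → ℝ) → ℝ)
    (F : Finset (Fin d → ℝ)) : Prop :=
  F ⊆ A ∧ ∃ (c : Fin d → ℝ) (b : ℝ),
    (∀ a ∈ A, lam a ≤ (∑ j, c j * a j) + b) ∧
    (∀ a ∈ A, (lam a = (∑ j, c j * a j) + b ↔ a ∈ F))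

section AffineMajorant

variable {𝕜 E : Type*} [Field 𝕜] [AddCommGroup E] [Module 𝕜 E]

theorem AffineMap.apply_sum_smul_of_sum_eq_one {ι : Type*} (h : E →ᵃ[𝕜] 𝕜) {s : Finset ι}
    {w : ι → 𝕜} (p : ι → E) (hw : ∑ i ∈ s, w i = 1) :
    h (∑ i ∈ s, w i • p i) = ∑ i ∈ s, w i * h (p i) := by
  rw [← s.affineCombination_eq_linear_combination p w hw, s.map_affineCombination p w hw,
    s.affineCombination_eq_linear_combination _ w hw]
  rfl

theorem AffineSubspace.exists_affineMap_eq_zero_ne_zero {s : AffineSubspace 𝕜 E} {p : E}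
    (hp : p ∉ s) : ∃ δ : E →ᵃ[𝕜] 𝕜, (∀ x ∈ s, δ x = 0) ∧ δ p ≠ 0 := by
  rcases s.eq_bot_or_nonempty with rfl | ⟨z, hz⟩
  · exact ⟨AffineMap.const 𝕜 E 1, fun x hx => absurd hx (AffineSubspace.notMem_bot 𝕜 E x),
      one_ne_zero⟩
  · have hpz : p - z ∉ s.direction := fun h =>
      hp ((AffineSubspace.vsub_right_mem_direction_iff_mem hz p).1 h)
    obtain ⟨f, hfp, hf⟩ := Submodule.exists_dual_map_eq_bot_of_notMem hpz inferInstance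
    refine ⟨f.toAffineMap - AffineMap.const 𝕜 E (f z), fun x hx => ?_, ?_⟩
    · have : f (x - z) = 0 :=
        LinearMap.le_ker_iff_map.2 hf (AffineSubspace.vsub_mem_direction hx hz)
      simpa [sub_eq_zero, map_sub] using this
    · simpa [map_sub, sub_eq_zero] using hfp

variable [LinearOrder 𝕜] (A : Finset E) (lam : E → 𝕜)

def IsAffineMajorant (h : E →ᵃ[𝕜] 𝕜) : Prop := ∀ x ∈ A, lam x ≤ h x

/-- For a majorant `h`, this is the face of `𝒮_λ` cut out by the graph of `h`; it is a facet
exactly when it spans affinely. -/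
def contactSet (h : E →ᵃ[𝕜] 𝕜) : Finset E := {x ∈ A | h x = lam x}

variable {A lam}

theorem mem_contactSet {h : E →ᵃ[𝕜] 𝕜} {x : E} :
    x ∈ contactSet A lam h ↔ x ∈ A ∧ h x = lam x :=
  Finset.mem_filter

theorem contactSet_subset (h : E →ᵃ[𝕜] 𝕜) : contactSet A lam h ⊆ A :=
  Finset.filter_subset _ _

theorem IsAffineMajorant.lt_of_notMem_contactSet {h : E →ᵃ[𝕜] 𝕜} (hh : IsAffineMajorant A lam h)
    {x : E} (hx : x ∈ A) (hxT : x ∉ contactSet A lam h) : lam x < h x :=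
  (hh x hx).lt_of_ne fun hx' => hxT (mem_contactSet.2 ⟨hx, hx'.symm⟩)

theorem finite_setOf_facet_isAffineMajorant :
    {h : E →ᵃ[𝕜] 𝕜 | IsAffineMajorant A lam h ∧
      affineSpan 𝕜 (contactSet A lam h : Set E) = ⊤}.Finite := by
  refine Set.Finite.of_finite_image (f := contactSet A lam)
    ((A.powerset : Set (Finset E)).toFinite.subset ?_) ?_
  · rintro _ ⟨h, -, rfl⟩
    exact mem_powerset.2 (contactSet_subset h)
  · rintro h₁ ⟨-, hT₁⟩ h₂ - hT
    refine AffineMap.ext_on hT₁ fun x hx => ?_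
    have hx₂ : x ∈ contactSet A lam h₂ := hT ▸ hx
    exact (mem_contactSet.1 hx).2.trans (mem_contactSet.1 hx₂).2.symm

variable [IsStrictOrderedRing 𝕜]

theorem AffineMap.nonneg_of_mem_convexHull {δ : E →ᵃ[𝕜] 𝕜} {s : Set E} (hδ : ∀ x ∈ s, 0 ≤ δ x)
    {m : E} (hm : m ∈ convexHull 𝕜 s) : 0 ≤ δ m :=
  convexHull_min hδ ((convex_Ici 0).affine_preimage δ) hm

variable (A lam) in
theorem exists_isAffineMajorant : ∃ h : E →ᵃ[𝕜] 𝕜, IsAffineMajorant A lam h :=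
  ⟨AffineMap.const 𝕜 E (∑ x ∈ A, |lam x|), fun _ hx =>
    (le_abs_self _).trans (single_le_sum (fun y _ => abs_nonneg (lam y)) hx)⟩

theorem exists_descent_direction (hA : affineSpan 𝕜 (A : Set E) = ⊤) {m : E}
    (hm : m ∈ convexHull 𝕜 (A : Set E)) {T : Set E} (hT : affineSpan 𝕜 T ≠ ⊤) :
    ∃ δ : E →ᵃ[𝕜] 𝕜, (∀ x ∈ T, δ x = 0) ∧ δ m ≤ 0 ∧ ∃ x ∈ A, δ x < 0 := by
  obtain ⟨p, hpA, hpT⟩ : ∃ p ∈ A, p ∉ affineSpan 𝕜 T := by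
    by_contra! hsub
    exact hT (eq_top_iff.2 (hA ▸ affineSpan_le.2 hsub))
  obtain ⟨δ₀, hδ₀T, hδ₀p⟩ := AffineSubspace.exists_affineMap_eq_zero_ne_zero hpT
  obtain ⟨δ, hδT, hδm, hδp⟩ : ∃ δ : E →ᵃ[𝕜] 𝕜, (∀ x ∈ T, δ x = 0) ∧ δ m ≤ 0 ∧ δ p ≠ 0 := by
    rcases le_total (δ₀ m) 0 with hle | hge
    · exact ⟨δ₀, fun x hx => hδ₀T x (subset_affineSpan 𝕜 T hx), hle, hδ₀p⟩
    · exact ⟨-δ₀, fun x hx => by simp [hδ₀T x (subset_affineSpan 𝕜 T hx)], by simpa using hge,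
        by simpa using hδ₀p⟩
  by_cases hneg : ∃ x ∈ A, δ x < 0
  · exact ⟨δ, hδT, hδm, hneg⟩
  -- `δ ≥ 0` on `A` forces `δ m = 0`, so `-δ` works.
  push Not at hneg
  have hm0 : δ m = 0 := le_antisymm hδm (AffineMap.nonneg_of_mem_convexHull hneg hm)
  refine ⟨-δ, fun x hx => by simp [hδT x hx], by simp [hm0], p, hpA, ?_⟩
  simpa using lt_of_le_of_ne (hneg p hpA) hδp.symm

theorem IsAffineMajorant.exists_contactSet_ssubset {h δ : E →ᵃ[𝕜] 𝕜}
    (hh : IsAffineMajorant A lam h) (hδT : ∀ x ∈ contactSet A lam h, δ x = 0)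
    (hδ : ∃ x ∈ A, δ x < 0) :
    ∃ t : 𝕜, 0 ≤ t ∧ IsAffineMajorant A lam (h + t • δ) ∧
      contactSet A lam h ⊂ contactSet A lam (h + t • δ) := by
  -- `h + t • δ` touches `lam` at `x` when `t = ratio x`.
  set ratio : E → 𝕜 := fun x => (h x - lam x) / -δ x
  obtain ⟨x₀, hx₀, hmin⟩ := Finset.exists_min_image {x ∈ A | δ x < 0} ratio
    (by simpa [Finset.Nonempty] using hδ)
  obtain ⟨hx₀A, hx₀δ⟩ := Finset.mem_filter.1 hx₀
  have ht : 0 ≤ ratio x₀ := div_nonneg (sub_nonneg.2 (hh x₀ hx₀A)) (by linarith)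
  refine ⟨ratio x₀, ht, fun x hx => ?_, ?_⟩
  · simp only [AffineMap.coe_add, AffineMap.coe_smul, Pi.add_apply, Pi.smul_apply, smul_eq_mul]
    rcases lt_or_ge (δ x) 0 with hδx | hδx
    · have := hmin x (Finset.mem_filter.2 ⟨hx, hδx⟩)
      rw [le_div_iff₀ (by linarith)] at this
      linarith
    · nlinarith [hh x hx]
  · rw [Finset.ssubset_iff_of_subset fun x hx => ?_]
    · refine ⟨x₀, mem_contactSet.2 ⟨hx₀A, ?_⟩, fun hx₀T => hx₀δ.ne (hδT x₀ hx₀T)⟩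
      simp only [AffineMap.coe_add, AffineMap.coe_smul, Pi.add_apply, Pi.smul_apply, smul_eq_mul,
        ratio]
      rw [div_mul_eq_mul_div, div_neg, mul_div_cancel_right₀ _ hx₀δ.ne]
      ring
    · rw [mem_contactSet] at hx ⊢
      simp [hδT x (mem_contactSet.2 hx), hx.2, hx.1]

theorem IsAffineMajorant.exists_facet_le (hA : affineSpan 𝕜 (A : Set E) = ⊤) {m : E}
    (hm : m ∈ convexHull 𝕜 (A : Set E)) {h : E →ᵃ[𝕜] 𝕜} (hh : IsAffineMajorant A lam h) :
    ∃ h' : E →ᵃ[𝕜] 𝕜, IsAffineMajorant A lam h' ∧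
      affineSpan 𝕜 (contactSet A lam h' : Set E) = ⊤ ∧ h' m ≤ h m := by
  by_cases hT : affineSpan 𝕜 (contactSet A lam h : Set E) = ⊤
  · exact ⟨h, hh, hT, le_rfl⟩
  obtain ⟨δ, hδT, hδm, hδ⟩ := exists_descent_direction hA hm hT
  obtain ⟨t, ht, hh₁, hsub⟩ := hh.exists_contactSet_ssubset hδT hδ
  obtain ⟨h', hh', hT', hle⟩ := hh₁.exists_facet_le hA hm
  refine ⟨h', hh', hT', hle.trans ?_⟩
  simpa using mul_nonpos_of_nonneg_of_nonpos ht hδm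
termination_by #A - #(contactSet A lam h)
decreasing_by
  have := card_le_card (contactSet_subset (A := A) (lam := lam) (h + t • δ))
  have := card_lt_card hsub
  omega

end AffineMajorant

section Topological

open Filter Topology

variable {E : Type*} [NormedAddCommGroup E] [NormedSpace ℝ E] {A : Finset E} {lam : E → ℝ}

theorem IsAffineMajorant.exists_pos_add_smul {h δ : E →ᵃ[ℝ] ℝ} (hh : IsAffineMajorant A lam h)
    (hδT : ∀ x ∈ contactSet A lam h, 0 ≤ δ x) :
    ∃ t : ℝ, 0 < t ∧ IsAffineMajorant A lam (h + t • δ) := by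
  have hev : ∀ x ∈ A, ∀ᶠ t in 𝓝[>] (0 : ℝ), lam x ≤ h x + t * δ x := by
    intro x hx
    by_cases hxT : h x = lam x
    · filter_upwards [self_mem_nhdsWithin] with t ht
      nlinarith [hδT x (mem_contactSet.2 ⟨hx, hxT⟩), Set.mem_Ioi.1 ht]
    · have hlim : Tendsto (fun t : ℝ => h x + t * δ x) (𝓝 0) (𝓝 (h x)) :=
        (by fun_prop : Continuous fun t : ℝ => h x + t * δ x).tendsto' 0 (h x) (by simp)
      exact nhdsWithin_le_nhds ((hlim.eventually (lt_mem_nhds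
        (lt_of_le_of_ne (hh x hx) (Ne.symm hxT)))).mono fun t => le_of_lt)
  obtain ⟨t, hmaj, ht⟩ := ((eventually_all_finset A).2 hev).and self_mem_nhdsWithin |>.exists
  exact ⟨t, ht, fun x hx => by simpa using hmaj x hx⟩

theorem exists_facet_mem_convexHull_contactSet (hA : affineSpan ℝ (A : Set E) = ⊤) {m : E}
    (hm : m ∈ convexHull ℝ (A : Set E)) :
    ∃ h : E →ᵃ[ℝ] ℝ, IsAffineMajorant A lam h ∧
      affineSpan ℝ (contactSet A lam h : Set E) = ⊤ ∧
      m ∈ convexHull ℝ (contactSet A lam h : Set E) := by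
  obtain ⟨h₀, hh₀⟩ := exists_isAffineMajorant A lam
  obtain ⟨h₁, hh₁, hT₁, -⟩ := hh₀.exists_facet_le hA hm
  obtain ⟨h, ⟨hh, hT⟩, hmin⟩ := Set.exists_min_image _ (fun h : E →ᵃ[ℝ] ℝ => h m)
    finite_setOf_facet_isAffineMajorant ⟨h₁, hh₁, hT₁⟩
  refine ⟨h, hh, hT, ?_⟩
  by_contra hmT
  obtain ⟨f, u, hfT, hfm⟩ := geometric_hahn_banach_closed_point (convex_convexHull ℝ _)
    ((contactSet A lam h).finite_toSet.isCompact_convexHull ℝ).isClosed hmT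
  set δ : E →ᵃ[ℝ] ℝ := AffineMap.const ℝ E u - (f : E →ₗ[ℝ] ℝ).toAffineMap
  obtain ⟨t, ht, hh'⟩ := hh.exists_pos_add_smul (δ := δ) fun x hx => by
    simpa [δ] using (hfT x (subset_convexHull ℝ _ hx)).le
  obtain ⟨h', hh'', hT', hle⟩ := hh'.exists_facet_le hA hm
  have hdrop : (h + t • δ) m < h m := by
    simpa [δ] using mul_neg_of_pos_of_neg ht (sub_neg.2 hfm)
  exact (hmin h' ⟨hh'', hT'⟩).not_gt (hle.trans_lt hdrop)

end Topological

theorem AffineMap.apply_eq_sum_mul_add {d : ℕ} (h : (Fin d → ℝ) →ᵃ[ℝ] ℝ) (x : Fin d → ℝ) :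
    h x = ∑ j, h.linear (Pi.single j 1) * x j + h 0 := by
  conv_lhs => rw [h.decomp, Pi.add_apply, LinearMap.pi_apply_eq_sum_univ]
  congr 1
  refine sum_congr rfl fun j _ => ?_
  rw [smul_eq_mul, mul_comm]
  congr
  ext k
  simp [Pi.single_apply, eq_comm]

theorem IsAffineMajorant.isFaceOfRegSubdiv_contactSet {d : ℕ} {A : Finset (Fin d → ℝ)}
    {lam : (Fin d → ℝ) → ℝ} {h : (Fin d → ℝ) →ᵃ[ℝ] ℝ} (hh : IsAffineMajorant A lam h) :
    IsFaceOfRegSubdiv d A lam (contactSet A lam h) := by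
  refine ⟨contactSet_subset h, fun j => h.linear (Pi.single j 1), h 0, fun x hx => ?_,
    fun x hx => ?_⟩ <;> rw [← h.apply_eq_sum_mul_add]
  · exact hh x hx
  · exact ⟨fun hx' => mem_contactSet.2 ⟨hx, hx'.symm⟩, fun hx' => (mem_contactSet.1 hx').2.symm⟩

/-- If `{a, b} ⊆ 𝒜` is not a subset of any face of the regular subdivision `𝒮_λ`, then
some point of the open segment between `a` and `b` is a convex combination of the points
of a facet `𝒢` of `𝒮_λ`, and the corresponding combination of lifted values satisfies a
strict inequality. -/
theorem segment_meets_facet_of_non_face (d : ℕ) (A : Finset (Fin d → ℝ))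
    (hspan : affineSpan ℝ (A : Set (Fin d → ℝ)) = ⊤)
    (lam : (Fin d → ℝ) → ℝ) (a b : Fin d → ℝ) (ha : a ∈ A) (hb : b ∈ A)
    (hnotface : ∀ F : Finset (Fin d → ℝ),
      IsFaceOfRegSubdiv d A lam F → ¬(a ∈ F ∧ b ∈ F)) :
    ∃ G : Finset (Fin d → ℝ), IsFaceOfRegSubdiv d A lam G ∧
      affineSpan ℝ (G : Set (Fin d → ℝ)) = ⊤ ∧
      ∃ (βa βb : ℝ) (α : (Fin d → ℝ) → ℝ),
        0 < βa ∧ 0 < βb ∧ βa + βb = 1 ∧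
        (∀ g ∈ G, 0 ≤ α g) ∧ (∑ g ∈ G, α g = 1) ∧
        βa • a + βb • b = ∑ g ∈ G, α g • g ∧
        βa * lam a + βb * lam b < ∑ g ∈ G, α g * lam g := by
  have hβ : (1 / 2 : ℝ) + 1 / 2 = 1 := by norm_num
  have hm : (1 / 2 : ℝ) • a + (1 / 2 : ℝ) • b ∈ convexHull ℝ (A : Set (Fin d → ℝ)) :=
    convex_convexHull ℝ _ (subset_convexHull ℝ _ ha) (subset_convexHull ℝ _ hb)
      (by norm_num) (by norm_num) hβ
  obtain ⟨h, hh, hG, hmG⟩ := exists_facet_mem_convexHull_contactSet (lam := lam) hspan hm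
  obtain ⟨α, hα₀, hα₁, hαm⟩ := Finset.mem_convexHull'.1 hmG
  have hface := hh.isFaceOfRegSubdiv_contactSet
  have hlt : lam a + lam b < h a + h b := by
    rcases not_and_or.1 (hnotface _ hface) with haG | hbG
    · linarith [hh.lt_of_notMem_contactSet ha haG, hh b hb]
    · linarith [hh.lt_of_notMem_contactSet hb hbG, hh a ha]
  refine ⟨_, hface, hG, 1 / 2, 1 / 2, α, by norm_num, by norm_num, hβ, hα₀, hα₁, hαm.symm, ?_⟩
  calc 1 / 2 * lam a + 1 / 2 * lam b < 1 / 2 * h a + 1 / 2 * h b := by linarith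
    _ = h (∑ g ∈ contactSet A lam h, α g • g) := by
      rw [hαm, Convex.combo_affine_apply hβ, smul_eq_mul, smul_eq_mul]
    _ = ∑ g ∈ contactSet A lam h, α g * lam g :=
      (h.apply_sum_smul_of_sum_eq_one id hα₁).trans
        (sum_congr rfl fun g hg => by rw [id, (mem_contactSet.1 hg).2])
end

section
/- Let 𝒜 ⊂ ℝ^d be finite and define φ_𝒜 : ℝ^d_{>0} → ▵^𝒜 by φ_𝒜(x) = [x^a : a ∈ 𝒜] (homogeneous coordinates, i.e., the vector (x^a)_{a∈𝒜} normalized to sum 1), where x^a = x_1^{a_1}···x_d^{a_d} with real exponents. Let X_𝒜 be the closure of the image of φ_𝒜. Then the map taut_𝒜 : ▵^𝒜 → ℝ^d, z ↦ Σ_{a∈𝒜} z_a·a, restricts to a homeomorphism from X_𝒜 onto the convex hull Δ_𝒜 of 𝒜 (Birch's Theorem). -/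
open Finset

noncomputable def toricMonomial (d : ℕ) (A : Finset (Fin d → ℝ)) (x : Fin d → ℝ) :
    ↥A → ℝ := fun a => ∏ j, (x j) ^ ((a : Fin d → ℝ) j)

noncomputable def simplexNormalize (d : ℕ) (A : Finset (Fin d → ℝ)) (z : ↥A → ℝ) :
    ↥A → ℝ := fun a => z a / ∑ b : ↥A, z b

noncomputable def toricVariety (d : ℕ) (A : Finset (Fin d → ℝ)) : Set (↥A → ℝ) :=
  closure {z | ∃ x : Fin d → ℝ, (∀ j, 0 < x j) ∧
    z = simplexNormalize d A (toricMonomial d A x)}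

noncomputable def tautMap (d : ℕ) (A : Finset (Fin d → ℝ)) (z : ↥A → ℝ) :
    Fin d → ℝ := ∑ a : ↥A, z a • (a : Fin d → ℝ)

/-!
Write the points of the parametrized image as `z_a = exp ⟪y, a⟫ / ∑_b exp ⟪y, b⟫`. For such `z`,
`∑_a w_a log z_a` depends only on `taut w` when `∑_a w_a = 1`, so Gibbs' inequality says that `z`
maximizes the entropy `-∑_a z_a log z_a` on its fiber of `taut` in the simplex. A perturbation
argument passes this to the closure `X_𝒜`, and strict concavity of the entropy makes `taut`
injective on `X_𝒜`.

A point `r = taut u` with `u > 0` is the image of a parametrized point: the function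
`y ↦ ∑_a exp ⟪y, a - r⟫` is coercive on the direction space of `𝒜`, and at a minimum `y` its
derivative says that `taut z - r` is orthogonal to that space; as `taut z - r` also lies in it,
`taut z = r`. Such points `r` are dense in `Δ_𝒜` and `taut(X_𝒜)` is compact, so `taut` maps `X_𝒜`
onto `Δ_𝒜`; a continuous bijection from a compact space to a Hausdorff one is a homeomorphism.
-/

open Real Set Filter Topology Matrix

namespace Birch

section Entropy

variable {ι : Type*} [Fintype ι]

noncomputable def entropy (p : ι → ℝ) : ℝ := ∑ i, negMulLog (p i)

lemma continuous_entropy : Continuous (entropy (ι := ι)) :=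
  continuous_finsetSum _ fun i _ => continuous_negMulLog.comp (continuous_apply i)

lemma strictConcaveOn_entropy : StrictConcaveOn ℝ (stdSimplex ℝ ι) entropy := by
  refine ⟨convex_stdSimplex ℝ ι, fun p hp q hq hpq s t hs ht hst => ?_⟩
  obtain ⟨i, hi⟩ := Function.ne_iff.mp hpq
  simp only [entropy, Pi.add_apply, Pi.smul_apply, smul_eq_mul, Finset.mul_sum,
    ← Finset.sum_add_distrib]
  refine Finset.sum_lt_sum (fun j _ => ?_) ⟨i, mem_univ i, ?_⟩
  · exact concaveOn_negMulLog.2 (hp.1 j) (hq.1 j) hs.le ht.le hst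
  · exact strictConcaveOn_negMulLog.2 (hp.1 i) (hq.1 i) hi hs ht hst

lemma mul_log_le_mul_log_add_sub {x y : ℝ} (hx : 0 ≤ x) (hy : 0 < y) :
    x * log y ≤ x * log x + (y - x) := by
  rcases hx.eq_or_lt with rfl | hx
  · simpa using hy.le
  have := mul_le_mul_of_nonneg_left (log_le_sub_one_of_pos (div_pos hy hx)) hx.le
  rw [log_div hy.ne' hx.ne', mul_sub, mul_sub, mul_div_cancel₀ _ hx.ne'] at this
  linarith

lemma entropy_le_neg_sum_mul_log {p q : ι → ℝ} (hp : p ∈ stdSimplex ℝ ι)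
    (hq : q ∈ stdSimplex ℝ ι) (hq₀ : ∀ i, 0 < q i) :
    entropy p ≤ -∑ i, p i * log (q i) := by
  have := Finset.sum_le_sum fun i (_ : i ∈ Finset.univ) =>
    mul_log_le_mul_log_add_sub (hp.1 i) (hq₀ i)
  rw [Finset.sum_add_distrib, Finset.sum_sub_distrib, hp.2, hq.2, sub_self, add_zero] at this
  simpa [entropy, negMulLog, Finset.sum_neg_distrib] using neg_le_neg this

end Entropy

section LogPartition

variable {n : ℕ} {ι : Type*} [Fintype ι] {V : Submodule ℝ (Fin n → ℝ)}
  {b : ι → Fin n → ℝ}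

lemma exists_pos_mul_norm_le_dotProduct [Nonempty ι] (hb : ∀ y ∈ V, y ≠ 0 → ∃ i, 0 < y ⬝ᵥ b i) :
    ∃ δ > 0, ∀ y ∈ V, ∃ i, δ * ‖y‖ ≤ y ⬝ᵥ b i := by
  set g : (Fin n → ℝ) → ℝ := fun y => Finset.univ.sup' Finset.univ_nonempty fun i => y ⬝ᵥ b i
  have hK : IsCompact ((V : Set (Fin n → ℝ)) ∩ Metric.sphere 0 1) :=
    (isCompact_sphere 0 1).inter_left (Submodule.closed_of_finiteDimensional V)
  have hg : Continuous g := Continuous.finset_sup'_apply _ fun i _ => by fun_prop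
  obtain ⟨δ, hδ, hδg⟩ := hK.exists_forall_le' hg.continuousOn (a := 0) fun u ⟨huV, hu⟩ => by
    obtain ⟨i, hi⟩ := hb u huV (ne_zero_of_mem_unit_sphere ⟨u, hu⟩)
    exact hi.trans_le (Finset.le_sup' (fun i => u ⬝ᵥ b i) (Finset.mem_univ i))
  refine ⟨δ, hδ, fun y hy => ?_⟩
  rcases eq_or_ne y 0 with rfl | hy₀
  · simp
  have hnorm : 0 < ‖y‖ := norm_pos_iff.2 hy₀
  obtain ⟨i, -, hi⟩ := (Finset.le_sup'_iff _).1 <| hδg (‖y‖⁻¹ • y)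
    ⟨V.smul_mem _ hy, by simp [norm_smul, hnorm.ne']⟩
  refine ⟨i, ?_⟩
  rw [smul_dotProduct, smul_eq_mul, le_inv_mul_iff₀ hnorm] at hi
  linarith

lemma exists_isMinOn_sum_exp_dotProduct [Nonempty ι] (hb : ∀ y ∈ V, y ≠ 0 → ∃ i, 0 < y ⬝ᵥ b i) :
    ∃ y ∈ V, IsMinOn (fun y => ∑ i, exp (y ⬝ᵥ b i)) V y := by
  obtain ⟨δ, hδ, hδb⟩ := exists_pos_mul_norm_le_dotProduct hb
  set f : V → ℝ := fun y => ∑ i, exp ((y : Fin n → ℝ) ⬝ᵥ b i)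
  have hf : Continuous f := by fun_prop
  have hcoercive : Tendsto f (cocompact V) atTop := by
    refine tendsto_atTop_mono (fun y => ?_)
      (tendsto_norm_cocompact_atTop.const_mul_atTop hδ)
    obtain ⟨i, hi⟩ := hδb y y.2
    rw [Submodule.norm_coe] at hi
    calc δ * ‖y‖ ≤ exp ((y : Fin n → ℝ) ⬝ᵥ b i) := by
          linarith [add_one_le_exp ((y : Fin n → ℝ) ⬝ᵥ b i)]
      _ ≤ f y := Finset.single_le_sum (f := fun j => exp ((y : Fin n → ℝ) ⬝ᵥ b j))
          (fun j _ => (exp_pos _).le) (Finset.mem_univ i)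
  obtain ⟨y, hy⟩ := hf.exists_forall_le hcoercive
  exact ⟨y, y.2, fun y' hy' => hy ⟨y', hy'⟩⟩

lemma sum_exp_dotProduct_mul_eq_zero_of_isMinOn {y v : Fin n → ℝ} (hy : y ∈ V)
    (hmin : IsMinOn (fun y => ∑ i, exp (y ⬝ᵥ b i)) V y) (hv : v ∈ V) :
    ∑ i, exp (y ⬝ᵥ b i) * (v ⬝ᵥ b i) = 0 := by
  have hline : IsLocalMin (fun s : ℝ => ∑ i, exp ((y + s • v) ⬝ᵥ b i)) 0 :=
    Eventually.of_forall fun s => by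
      simpa using hmin (V.add_mem hy (V.smul_mem s hv))
  refine hline.hasDerivAt_eq_zero (HasDerivAt.fun_sum fun i _ => ?_)
  have := (((hasDerivAt_id (0 : ℝ)).mul_const (v ⬝ᵥ b i)).const_add (y ⬝ᵥ b i)).exp
  simpa [add_dotProduct, smul_dotProduct] using this

end LogPartition

variable {d : ℕ} {A : Finset (Fin d → ℝ)}

section MomentMap

noncomputable def tautLinear (d : ℕ) (A : Finset (Fin d → ℝ)) : (↥A → ℝ) →ₗ[ℝ] (Fin d → ℝ) :=
  Fintype.linearCombination ℝ Subtype.val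

lemma coe_tautLinear : ⇑(tautLinear d A) = tautMap d A := by
  ext z
  simp [tautLinear, tautMap, Fintype.linearCombination_apply]

lemma continuous_tautMap : Continuous (tautMap d A) :=
  coe_tautLinear (A := A) ▸ (tautLinear d A).continuous_of_finiteDimensional

lemma image_tautMap_stdSimplex :
    tautMap d A '' stdSimplex ℝ A = convexHull ℝ (A : Set (Fin d → ℝ)) := by
  classical
  rw [← convexHull_basis_eq_stdSimplex, ← coe_tautLinear, LinearMap.image_convexHull,
    ← range_comp]
  congr 1
  ext x
  simp [tautLinear, Fintype.linearCombination_apply, ite_smul]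

lemma tautMap_sub_mem_vectorSpan {u w : ↥A → ℝ} (hu : u ∈ stdSimplex ℝ A)
    (hw : w ∈ stdSimplex ℝ A) :
    tautMap d A u - tautMap d A w ∈ vectorSpan ℝ (A : Set (Fin d → ℝ)) := by
  have hull (v) (hv : v ∈ stdSimplex ℝ A) := convexHull_subset_affineSpan (𝕜 := ℝ) _
    (image_tautMap_stdSimplex ▸ mem_image_of_mem (tautMap d A) hv)
  exact vsub_mem_vectorSpan_of_mem_affineSpan_of_mem_affineSpan (hull u hu) (hull w hw)

lemma dotProduct_tautMap (v : Fin d → ℝ) (z : ↥A → ℝ) :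
    v ⬝ᵥ tautMap d A z = ∑ a, z a * (v ⬝ᵥ a) := by
  simp [tautMap, dotProduct_sum, dotProduct_smul]

end MomentMap

section ToricPoint

variable (A) in
noncomputable def toricPoint (y : Fin d → ℝ) : ↥A → ℝ :=
  simplexNormalize d A (toricMonomial d A fun j => exp (y j))

lemma toricPoint_apply (y : Fin d → ℝ) (a : ↥A) :
    toricPoint A y a = exp (y ⬝ᵥ a) / ∑ b : ↥A, exp (y ⬝ᵥ b) := by
  have hmon (b : ↥A) : toricMonomial d A (fun j => exp (y j)) b = exp (y ⬝ᵥ b) := by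
    simp [toricMonomial, dotProduct, rpow_def_of_pos (exp_pos _), exp_sum]
  simp [toricPoint, simplexNormalize, hmon]

lemma sum_exp_dotProduct_pos (hA : A.Nonempty) (y : Fin d → ℝ) :
    0 < ∑ b : ↥A, exp (y ⬝ᵥ b) :=
  have : Nonempty ↥A := hA.to_subtype
  Finset.sum_pos (fun _ _ => exp_pos _) Finset.univ_nonempty

lemma toricPoint_pos (hA : A.Nonempty) (y : Fin d → ℝ) (a : ↥A) : 0 < toricPoint A y a := by
  rw [toricPoint_apply]
  exact div_pos (exp_pos _) (sum_exp_dotProduct_pos hA y)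

lemma toricPoint_mem_stdSimplex (hA : A.Nonempty) (y : Fin d → ℝ) :
    toricPoint A y ∈ stdSimplex ℝ A := by
  refine ⟨fun a => (toricPoint_pos hA y a).le, ?_⟩
  simp_rw [toricPoint_apply, ← Finset.sum_div]
  exact div_self (sum_exp_dotProduct_pos hA y).ne'

lemma toricVariety_eq_closure_range : toricVariety d A = closure (range (toricPoint A)) := by
  refine congrArg closure (Set.ext fun z => ⟨?_, ?_⟩)
  · rintro ⟨x, hx, rfl⟩
    refine ⟨fun j => log (x j), ?_⟩
    simp only [toricPoint, exp_log (hx _)]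
  · rintro ⟨y, rfl⟩
    exact ⟨fun j => exp (y j), fun j => exp_pos _, rfl⟩

lemma toricVariety_subset_stdSimplex (hA : A.Nonempty) :
    toricVariety d A ⊆ stdSimplex ℝ A := by
  rw [toricVariety_eq_closure_range]
  exact closure_minimal (range_subset_iff.2 (toricPoint_mem_stdSimplex hA))
    (isClosed_stdSimplex ℝ A)

lemma isCompact_toricVariety (hA : A.Nonempty) : IsCompact (toricVariety d A) :=
  (isCompact_stdSimplex ℝ A).of_isClosed_subset isClosed_closure
    (toricVariety_subset_stdSimplex hA)

end ToricPoint

section Injectivity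

lemma sum_mul_log_toricPoint (hA : A.Nonempty) (y : Fin d → ℝ) {w : ↥A → ℝ}
    (hw : ∑ a, w a = 1) :
    ∑ a, w a * log (toricPoint A y a) =
      y ⬝ᵥ tautMap d A w - log (∑ b : ↥A, exp (y ⬝ᵥ b)) := by
  simp_rw [toricPoint_apply, log_div (exp_pos _).ne' (sum_exp_dotProduct_pos hA y).ne', log_exp, mul_sub,
    Finset.sum_sub_distrib, ← Finset.sum_mul, hw, one_mul, dotProduct_tautMap]

lemma entropy_le_entropy_toricPoint (hA : A.Nonempty) (y : Fin d → ℝ) {w : ↥A → ℝ}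
    (hw : w ∈ stdSimplex ℝ A) (h : tautMap d A w = tautMap d A (toricPoint A y)) :
    entropy w ≤ entropy (toricPoint A y) := by
  have hz := toricPoint_mem_stdSimplex hA y
  calc entropy w ≤ -∑ a, w a * log (toricPoint A y a) :=
        entropy_le_neg_sum_mul_log hw hz (toricPoint_pos hA y)
    _ = -∑ a, toricPoint A y a * log (toricPoint A y a) := by
        rw [sum_mul_log_toricPoint hA y hw.2, sum_mul_log_toricPoint hA y hz.2, h]
    _ = entropy (toricPoint A y) := by simp [entropy, negMulLog]

/-- Approximate `z` by toric points `zₙ`; then `zₙ + (w - z) / 2` lies in the fiber of `zₙ`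
for large `n`, and in the limit Gibbs' inequality compares the midpoint of `z` and `w` with `z`.
Concavity of the entropy finishes the argument. -/
lemma entropy_le_of_mem_toricVariety (hA : A.Nonempty) {z w : ↥A → ℝ}
    (hz : z ∈ toricVariety d A) (hw : w ∈ stdSimplex ℝ A)
    (h : tautMap d A w = tautMap d A z) : entropy w ≤ entropy z := by
  have hzS := toricVariety_subset_stdSimplex hA hz
  rw [toricVariety_eq_closure_range] at hz
  obtain ⟨zs, hzs, hlim⟩ := mem_closure_iff_seq_limit.mp hz
  choose y hy using hzs
  obtain rfl : (fun n => toricPoint A (y n)) = zs := funext hy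
  set m : ℕ → ↥A → ℝ := fun n => toricPoint A (y n) + (1 / 2 : ℝ) • (w - z)
  have hm_lim : Tendsto m atTop (𝓝 (z + (1 / 2 : ℝ) • (w - z))) := hlim.add_const _
  have hm_nonneg (a : ↥A) : ∀ᶠ n in atTop, 0 ≤ m n a := by
    rcases le_or_gt (z a) (w a) with hle | hlt
    · refine Eventually.of_forall fun n => add_nonneg (toricPoint_pos hA (y n) a).le ?_
      simp only [Pi.smul_apply, Pi.sub_apply, smul_eq_mul]
      linarith
    · have hpos : 0 < z a + (1 / 2 : ℝ) * (w a - z a) := by linarith [hw.1 a]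
      filter_upwards [((continuous_apply a).tendsto _).comp hm_lim |>.eventually
        (lt_mem_nhds hpos)] with n hn
      exact hn.le
  have hm_mem : ∀ᶠ n in atTop, m n ∈ stdSimplex ℝ A := by
    filter_upwards [eventually_all.2 hm_nonneg] with n hn
    refine ⟨hn, ?_⟩
    simp only [m, Pi.add_apply, Pi.smul_apply, Pi.sub_apply, smul_eq_mul, Finset.sum_add_distrib,
      ← Finset.mul_sum, Finset.sum_sub_distrib, hw.2, hzS.2, (toricPoint_mem_stdSimplex hA _).2]
    ring
  have hm_le : entropy (z + (1 / 2 : ℝ) • (w - z)) ≤ entropy z := by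
    refine le_of_tendsto_of_tendsto ((continuous_entropy.tendsto _).comp hm_lim)
      ((continuous_entropy.tendsto _).comp hlim) ?_
    filter_upwards [hm_mem] with n hn
    refine entropy_le_entropy_toricPoint hA (y n) hn ?_
    simp only [m, ← coe_tautLinear] at h ⊢
    rw [map_add, map_smul, map_sub, h, sub_self, smul_zero, add_zero]
  have hconc := (strictConcaveOn_entropy.concaveOn).2 hzS hw (by norm_num : (0 : ℝ) ≤ 1 / 2)
    (by norm_num : (0 : ℝ) ≤ 1 / 2) (by norm_num)
  have hmid : (1 / 2 : ℝ) • z + (1 / 2 : ℝ) • w = z + (1 / 2 : ℝ) • (w - z) := by module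
  rw [hmid, smul_eq_mul, smul_eq_mul] at hconc
  linarith

lemma injOn_tautMap_toricVariety (hA : A.Nonempty) :
    InjOn (tautMap d A) (toricVariety d A) := by
  intro z hz z' hz' h
  by_contra hne
  have hzS := toricVariety_subset_stdSimplex hA hz
  have hz'S := toricVariety_subset_stdSimplex hA hz'
  set m := (1 / 2 : ℝ) • z + (1 / 2 : ℝ) • z'
  have hm : m ∈ stdSimplex ℝ A := convex_stdSimplex ℝ A hzS hz'S (by norm_num) (by norm_num)
    (by norm_num)
  have hmz : tautMap d A m = tautMap d A z := by
    simp only [m, ← coe_tautLinear, map_add, map_smul] at h ⊢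
    rw [← h]
    module
  have := strictConcaveOn_entropy.2 hzS hz'S hne (by norm_num : (0 : ℝ) < 1 / 2)
    (by norm_num : (0 : ℝ) < 1 / 2) (by norm_num)
  have h₁ := entropy_le_of_mem_toricVariety hA hz hm hmz
  have h₂ := entropy_le_of_mem_toricVariety hA hz' hm (hmz.trans h)
  simp only [smul_eq_mul] at this
  linarith

end Injectivity

section Surjectivity

lemma eq_zero_of_dotProduct_le_tautMap {u : ↥A → ℝ} (hu : u ∈ stdSimplex ℝ A)
    (hpos : ∀ a, 0 < u a) {y : Fin d → ℝ} (hy : y ∈ vectorSpan ℝ (A : Set (Fin d → ℝ)))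
    (hle : ∀ a : ↥A, y ⬝ᵥ a ≤ y ⬝ᵥ tautMap d A u) : y = 0 := by
  have hsum : ∑ a, u a * (y ⬝ᵥ a) = ∑ a, u a * (y ⬝ᵥ tautMap d A u) := by
    rw [← Finset.sum_mul, hu.2, one_mul, dotProduct_tautMap]
  have hconst (a : ↥A) : y ⬝ᵥ a = y ⬝ᵥ tautMap d A u :=
    mul_left_cancel₀ (hpos a).ne' <| (Finset.sum_eq_sum_iff_of_le fun a _ =>
      mul_le_mul_of_nonneg_left (hle a) (hu.1 a)).1 hsum a (Finset.mem_univ a)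
  have hker : vectorSpan ℝ (A : Set (Fin d → ℝ)) ≤ LinearMap.ker (dotProductBilin ℝ ℝ y) := by
    rw [vectorSpan_def, Submodule.span_le]
    rintro _ ⟨a, ha, b, hb, rfl⟩
    simp [dotProduct_sub, hconst ⟨a, ha⟩, hconst ⟨b, hb⟩]
  simpa using hker hy

lemma exists_toricPoint_tautMap_eq (hA : A.Nonempty) {u : ↥A → ℝ} (hu : u ∈ stdSimplex ℝ A)
    (hpos : ∀ a, 0 < u a) : ∃ y, tautMap d A (toricPoint A y) = tautMap d A u := by
  have : Nonempty ↥A := hA.to_subtype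
  set r := tautMap d A u
  set V := vectorSpan ℝ (A : Set (Fin d → ℝ))
  have hb : ∀ y ∈ V, y ≠ 0 → ∃ a : ↥A, 0 < y ⬝ᵥ ((a : Fin d → ℝ) - r) := by
    intro y hy hy₀
    by_contra! h
    exact hy₀ (eq_zero_of_dotProduct_le_tautMap hu hpos hy fun a => by
      simpa [dotProduct_sub] using h a)
  obtain ⟨y, hyV, hmin⟩ := exists_isMinOn_sum_exp_dotProduct hb
  refine ⟨y, ?_⟩
  have hz := toricPoint_mem_stdSimplex hA y
  obtain ⟨c, hc⟩ : ∃ c, ∀ a : ↥A, toricPoint A y a = exp (y ⬝ᵥ ((a : Fin d → ℝ) - r)) * c :=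
    ⟨exp (y ⬝ᵥ r) / ∑ b : ↥A, exp (y ⬝ᵥ b), fun a => by
      rw [toricPoint_apply, dotProduct_sub, exp_sub]
      field_simp⟩
  have horth : ∀ v ∈ V, v ⬝ᵥ (tautMap d A (toricPoint A y) - r) = 0 := fun v hv =>
    calc v ⬝ᵥ (tautMap d A (toricPoint A y) - r)
      _ = ∑ a, toricPoint A y a * (v ⬝ᵥ ((a : Fin d → ℝ) - r)) := by
        simp only [dotProduct_sub, dotProduct_tautMap, mul_sub, Finset.sum_sub_distrib,
          ← Finset.sum_mul, hz.2, one_mul]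
      _ = (∑ a : ↥A, exp (y ⬝ᵥ ((a : Fin d → ℝ) - r)) * (v ⬝ᵥ ((a : Fin d → ℝ) - r))) * c := by
        rw [Finset.sum_mul]
        exact Finset.sum_congr rfl fun a _ => by rw [hc]; ring
      _ = 0 := by rw [sum_exp_dotProduct_mul_eq_zero_of_isMinOn hyV hmin hv, zero_mul]
  exact sub_eq_zero.1 <| dotProduct_self_eq_zero.1 <|
    horth _ (tautMap_sub_mem_vectorSpan hz hu)

lemma image_tautMap_toricVariety (hA : A.Nonempty) :
    tautMap d A '' toricVariety d A = convexHull ℝ (A : Set (Fin d → ℝ)) := by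
  rw [← image_tautMap_stdSimplex]
  refine (image_mono (toricVariety_subset_stdSimplex hA)).antisymm ?_
  rintro _ ⟨u, hu, rfl⟩
  have : Nonempty ↥A := hA.to_subtype
  set c : ↥A → ℝ := fun _ => (Fintype.card A : ℝ)⁻¹
  have hc : c ∈ stdSimplex ℝ A := ⟨fun _ => by positivity, by simp [c, hA.card_pos.ne']⟩
  set u' : ℝ → ↥A → ℝ := fun t => (1 - t) • u + t • c
  have hlim : Tendsto (fun t => tautMap d A (u' t)) (𝓝[>] 0) (𝓝 (tautMap d A u)) :=
    ((continuous_tautMap.comp (by fun_prop : Continuous u')).tendsto' 0 _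
      (by simp [u'])).mono_left nhdsWithin_le_nhds
  refine ((isCompact_toricVariety hA).image continuous_tautMap).isClosed.mem_of_tendsto hlim ?_
  filter_upwards [Ioo_mem_nhdsGT zero_lt_one] with t ⟨ht₀, ht₁⟩
  have hpos (a : ↥A) : 0 < u' t a :=
    add_pos_of_nonneg_of_pos (mul_nonneg (by linarith) (hu.1 a)) (mul_pos ht₀ (by positivity))
  obtain ⟨y, hy⟩ := exists_toricPoint_tautMap_eq hA
    (convex_stdSimplex ℝ A hu hc (by linarith) ht₀.le (by ring)) hpos
  exact ⟨toricPoint A y, toricVariety_eq_closure_range ▸ subset_closure (mem_range_self y), hy⟩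

end Surjectivity

end Birch

/-- Birch's Theorem: the algebraic moment map restricts to a homeomorphism from the
real irrational toric variety `X_𝒜` onto the convex hull `Δ_𝒜` of `𝒜`. -/
theorem birch_theorem (d : ℕ) (A : Finset (Fin d → ℝ)) (hA : A.Nonempty) :
    ∃ h : ↥(toricVariety d A) ≃ₜ ↥(convexHull ℝ (A : Set (Fin d → ℝ))),
      ∀ z : ↥(toricVariety d A), (h z : Fin d → ℝ) = tautMap d A (z : ↥A → ℝ) := by
  have : CompactSpace (toricVariety d A) :=
    isCompact_iff_compactSpace.1 (Birch.isCompact_toricVariety hA)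
  have hbij : BijOn (tautMap d A) (toricVariety d A) (convexHull ℝ (A : Set (Fin d → ℝ))) :=
    Birch.image_tautMap_toricVariety hA ▸ (Birch.injOn_tautMap_toricVariety hA).bijOn_image
  have hcont : Continuous (hbij.equiv _) :=
    (Birch.continuous_tautMap.comp continuous_subtype_val).subtype_mk _
  exact ⟨hcont.homeoOfEquivCompactToT2, fun z => rfl⟩
end

section
/- Let 𝒜 ⊂ ℝ^d be finite and X_𝒜 ⊂ ▵^𝒜 the real irrational toric variety, the closure of {[x^a : a ∈ 𝒜] : x ∈ ℝ^d_{>0}}. For w, w' ∈ ℝ^𝒜_{>0}, the translates satisfy w.X_𝒜 = w'.X_𝒜 if and only if Log(w) − Log(w') ∈ Aff(𝒜), where Log is the coordinatewise logarithm and Aff(𝒜) ⊂ ℝ^𝒜 is the subspace of restrictions to 𝒜 of affine functions on ℝ^d. -/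
open Finset

/-- The torus action on the simplex: coordinatewise multiplication followed by
normalization. -/
noncomputable def torusAct (d : ℕ) (A : Finset (Fin d → ℝ)) (w z : ↥A → ℝ) :
    ↥A → ℝ := simplexNormalize d A (fun a => w a * z a)

/-- `Aff(𝒜)`: restrictions to `𝒜` of affine functions on `ℝ^d`. -/
def AffSet (d : ℕ) (A : Finset (Fin d → ℝ)) : Set (↥A → ℝ) :=
  {μ | ∃ (t₀ : ℝ) (t : Fin d → ℝ), ∀ a : ↥A, μ a = t₀ + ∑ j, t j * (a : Fin d → ℝ) j}

/-!
Writing `log w - log w' = t₀ + ⟨t, ·⟩`, the weight `w` is `e^{t₀} w'` times the monomial of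
`x = exp t`, so translating by `w` moves the point `x'^𝒜` of the orbit to the point `(x x')^𝒜`
translated by `w'`; continuity and compactness pass from the orbit to its closure.
Conversely, if `w.X_𝒜 = w'.X_𝒜`, the point `w.[1 : … : 1]` is `w'.z` for some `z ∈ X_𝒜` with all
coordinates positive, and `Log z` differs from `Log w - Log w'` by a constant. On the orbit `Log`
takes values in `Aff(𝒜)`, a closed subspace, so by continuity `Log z ∈ Aff(𝒜)` as well.
-/

lemma sum_mul_pos_of_mem_stdSimplex {ι : Type*} [Fintype ι] {w z : ι → ℝ}
    (hw : ∀ i, 0 < w i) (hz : z ∈ stdSimplex ℝ ι) : 0 < ∑ i, w i * z i := by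
  obtain ⟨i, -, hi⟩ : ∃ i ∈ univ, (0 : ℝ) < z i :=
    exists_lt_of_sum_lt (by simp [hz.2] : ∑ _ : ι, (0 : ℝ) < ∑ i, z i)
  exact sum_pos' (fun j _ => mul_nonneg (hw j).le (hz.1 j)) ⟨i, mem_univ i, mul_pos (hw i) hi⟩

variable {d : ℕ} {A : Finset (Fin d → ℝ)}

section AffSet

variable (d A) in
def affSubmodule : Submodule ℝ (↥A → ℝ) where
  carrier := AffSet d A
  add_mem' := by
    rintro _ _ ⟨s₀, s, hs⟩ ⟨t₀, t, ht⟩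
    refine ⟨s₀ + t₀, s + t, fun a => ?_⟩
    simp only [Pi.add_apply, hs, ht, add_mul, sum_add_distrib]
    ring
  zero_mem' := ⟨0, 0, fun a => by simp⟩
  smul_mem' := by
    rintro c _ ⟨t₀, t, ht⟩
    refine ⟨c * t₀, c • t, fun a => ?_⟩
    simp only [Pi.smul_apply, smul_eq_mul, ht, mul_add, mul_sum, mul_assoc]

lemma isClosed_affSet : IsClosed (AffSet d A) :=
  (affSubmodule d A).closed_of_finiteDimensional

lemma neg_mem_affSet {μ : ↥A → ℝ} (hμ : μ ∈ AffSet d A) : -μ ∈ AffSet d A :=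
  (affSubmodule d A).neg_mem hμ

lemma sub_mem_affSet {μ ν : ↥A → ℝ} (hμ : μ ∈ AffSet d A) (hν : ν ∈ AffSet d A) :
    μ - ν ∈ AffSet d A :=
  (affSubmodule d A).sub_mem hμ hν

lemma const_mem_affSet (c : ℝ) : (fun _ => c) ∈ AffSet d A :=
  ⟨c, 0, fun a => by simp⟩

lemma exp_mem_affSet_eq_smul_toricMonomial {μ : ↥A → ℝ} (hμ : μ ∈ AffSet d A) :
    ∃ c : ℝ, 0 < c ∧ ∃ y : Fin d → ℝ, (∀ j, 0 < y j) ∧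
      (fun a => Real.exp (μ a)) = c • toricMonomial d A y := by
  obtain ⟨t₀, t, ht⟩ := hμ
  refine ⟨Real.exp t₀, Real.exp_pos _, fun j => Real.exp (t j), fun j => Real.exp_pos _,
    funext fun a => ?_⟩
  simp only [ht, Real.exp_add, Real.exp_sum, Pi.smul_apply, smul_eq_mul, toricMonomial,
    Real.rpow_def_of_pos (Real.exp_pos _), Real.log_exp]

end AffSet

section Monomial

lemma toricMonomial_pos {x : Fin d → ℝ} (hx : ∀ j, 0 < x j) (a : ↥A) :
    0 < toricMonomial d A x a :=
  prod_pos fun j _ => Real.rpow_pos_of_pos (hx j) _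

lemma sum_toricMonomial_pos (hA : A.Nonempty) {x : Fin d → ℝ} (hx : ∀ j, 0 < x j) :
    0 < ∑ b, toricMonomial d A x b :=
  sum_pos (fun b _ => toricMonomial_pos hx b) (univ_nonempty_iff.2 hA.to_subtype)

lemma toricMonomial_one : toricMonomial d A 1 = 1 :=
  funext fun a => by simp [toricMonomial]

lemma toricMonomial_mul {x y : Fin d → ℝ} (hx : ∀ j, 0 ≤ x j) (hy : ∀ j, 0 ≤ y j) :
    toricMonomial d A (x * y) = toricMonomial d A x * toricMonomial d A y :=
  funext fun a => by
    simp only [toricMonomial, Pi.mul_apply, ← prod_mul_distrib, Real.mul_rpow (hx _) (hy _)]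

lemma log_toricMonomial {x : Fin d → ℝ} (hx : ∀ j, 0 < x j) (a : ↥A) :
    Real.log (toricMonomial d A x a) = ∑ j, Real.log (x j) * (a : Fin d → ℝ) j := by
  rw [toricMonomial, Real.log_prod fun j _ => (Real.rpow_pos_of_pos (hx j) _).ne']
  exact sum_congr rfl fun j _ => by rw [Real.log_rpow (hx j), mul_comm]

end Monomial

section Action

lemma simplexNormalize_smul {c : ℝ} (hc : c ≠ 0) (v : ↥A → ℝ) :
    simplexNormalize d A (c • v) = simplexNormalize d A v :=
  funext fun a => by
    simp only [simplexNormalize, Pi.smul_apply, smul_eq_mul, ← mul_sum, mul_div_mul_left _ _ hc]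

lemma simplexNormalize_mem_stdSimplex {v : ↥A → ℝ} (hv : ∀ a, 0 ≤ v a)
    (hsum : 0 < ∑ b, v b) : simplexNormalize d A v ∈ stdSimplex ℝ ↥A :=
  ⟨fun a => div_nonneg (hv a) hsum.le, by simp only [simplexNormalize, ← sum_div, div_self hsum.ne']⟩

lemma torusAct_simplexNormalize (w : ↥A → ℝ) {v : ↥A → ℝ} (hv : ∑ b, v b ≠ 0) :
    torusAct d A w (simplexNormalize d A v) = simplexNormalize d A (w * v) := by
  have : (fun a => w a * simplexNormalize d A v a) = (∑ b, v b)⁻¹ • (w * v) :=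
    funext fun a => by
      simp only [simplexNormalize, Pi.smul_apply, Pi.mul_apply, smul_eq_mul]
      field_simp
  rw [torusAct, this, simplexNormalize_smul (inv_ne_zero hv)]

lemma continuousOn_torusAct (w : ↥A → ℝ) :
    ContinuousOn (torusAct d A w) {z | ∑ b, w b * z b ≠ 0} :=
  continuousOn_pi.2 fun a =>
    (continuous_const.mul (continuous_apply a)).continuousOn.div
      (continuous_finsetSum _ fun b _ => continuous_const.mul (continuous_apply b)).continuousOn
      fun _ hz => hz

lemma eq_smul_div_of_simplexNormalize_eq_torusAct {w w' z : ↥A → ℝ} (hw' : ∀ a, w' a ≠ 0)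
    (hW : ∑ b, w b ≠ 0) (hS : ∑ b, w' b * z b ≠ 0)
    (h : simplexNormalize d A w = torusAct d A w' z) :
    z = ((∑ b, w' b * z b) / ∑ b, w b) • (w / w') :=
  funext fun a => by
    have ha : w a / ∑ b, w b = w' a * z a / ∑ b, w' b * z b := congrFun h a
    rw [div_eq_div_iff hW hS] at ha
    simp only [Pi.smul_apply, Pi.div_apply, smul_eq_mul]
    rw [div_mul_div_comm, eq_div_iff (mul_ne_zero hW (hw' a))]
    linear_combination -ha

end Action

section Orbit

variable (d A) in
def toricOrbit : Set (↥A → ℝ) :=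
  {z | ∃ x : Fin d → ℝ, (∀ j, 0 < x j) ∧ z = simplexNormalize d A (toricMonomial d A x)}

lemma toricOrbit_subset_stdSimplex (hA : A.Nonempty) : toricOrbit d A ⊆ stdSimplex ℝ ↥A := by
  rintro _ ⟨x, hx, rfl⟩
  exact simplexNormalize_mem_stdSimplex (fun a => (toricMonomial_pos hx a).le)
    (sum_toricMonomial_pos hA hx)

lemma toricVariety_subset_stdSimplex (hA : A.Nonempty) : toricVariety d A ⊆ stdSimplex ℝ ↥A :=
  closure_minimal (toricOrbit_subset_stdSimplex hA) (isClosed_stdSimplex _ _)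

lemma isCompact_toricVariety (hA : A.Nonempty) : IsCompact (toricVariety d A) :=
  (isCompact_stdSimplex _ _).of_isClosed_subset isClosed_closure (toricVariety_subset_stdSimplex hA)

lemma continuousOn_torusAct_toricVariety (hA : A.Nonempty) {w : ↥A → ℝ} (hw : ∀ a, 0 < w a) :
    ContinuousOn (torusAct d A w) (toricVariety d A) :=
  (continuousOn_torusAct w).mono fun _ hz =>
    (sum_mul_pos_of_mem_stdSimplex hw (toricVariety_subset_stdSimplex hA hz)).ne'

lemma simplexNormalize_one_mem_toricVariety : simplexNormalize d A 1 ∈ toricVariety d A :=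
  subset_closure ⟨1, fun _ => one_pos, by rw [toricMonomial_one]⟩

lemma log_mem_affSet_of_mem_toricOrbit {z : ↥A → ℝ} (hz : z ∈ toricOrbit d A) :
    (fun a => Real.log (z a)) ∈ AffSet d A := by
  obtain ⟨x, hx, rfl⟩ := hz
  refine ⟨-Real.log (∑ b, toricMonomial d A x b), fun j => Real.log (x j), fun a => ?_⟩
  have hsum := sum_toricMonomial_pos ⟨_, a.2⟩ hx
  change Real.log (toricMonomial d A x a / ∑ b, toricMonomial d A x b) = _
  rw [Real.log_div (toricMonomial_pos hx a).ne' hsum.ne', log_toricMonomial hx]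
  ring

lemma log_mem_affSet_of_mem_toricVariety {z : ↥A → ℝ} (hz : z ∈ toricVariety d A)
    (hpos : ∀ a, 0 < z a) : (fun a => Real.log (z a)) ∈ AffSet d A := by
  have hlog : ContinuousAt (fun (u : ↥A → ℝ) a => Real.log (u a)) z :=
    continuousAt_pi.2 fun a =>
      (continuous_apply a).continuousAt.log (hpos a).ne'
  refine isClosed_affSet.closure_subset_iff.2 ?_ (hlog.continuousWithinAt.mem_closure_image hz)
  rintro _ ⟨u, hu, rfl⟩
  exact log_mem_affSet_of_mem_toricOrbit hu

end Orbit

section Translates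

lemma image_toricOrbit_subset_of_eq_smul_mul_toricMonomial (hA : A.Nonempty)
    {w w' : ↥A → ℝ} {c : ℝ} (hc : c ≠ 0) {y : Fin d → ℝ} (hy : ∀ j, 0 < y j)
    (hw : w = c • (w' * toricMonomial d A y)) :
    torusAct d A w '' toricOrbit d A ⊆ torusAct d A w' '' toricOrbit d A := by
  rintro _ ⟨_, ⟨x, hx, rfl⟩, rfl⟩
  have hyx : ∀ j, 0 < (y * x) j := fun j => mul_pos (hy j) (hx j)
  refine ⟨_, ⟨y * x, hyx, rfl⟩, ?_⟩
  rw [torusAct_simplexNormalize _ (sum_toricMonomial_pos hA hyx).ne',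
    torusAct_simplexNormalize _ (sum_toricMonomial_pos hA hx).ne', hw, smul_mul_assoc,
    simplexNormalize_smul hc, toricMonomial_mul (fun j => (hy j).le) (fun j => (hx j).le), mul_assoc]

lemma image_toricVariety_subset_of_image_toricOrbit_subset (hA : A.Nonempty)
    {w w' : ↥A → ℝ} (hw : ∀ a, 0 < w a) (hw' : ∀ a, 0 < w' a)
    (h : torusAct d A w '' toricOrbit d A ⊆ torusAct d A w' '' toricOrbit d A) :
    torusAct d A w '' toricVariety d A ⊆ torusAct d A w' '' toricVariety d A := by
  have hclosed : IsClosed (torusAct d A w' '' toricVariety d A) :=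
    ((isCompact_toricVariety hA).image_of_continuousOn
      (continuousOn_torusAct_toricVariety hA hw')).isClosed
  calc torusAct d A w '' toricVariety d A
      ⊆ closure (torusAct d A w '' toricOrbit d A) :=
        (continuousOn_torusAct_toricVariety hA hw).image_closure
    _ ⊆ closure (torusAct d A w' '' toricOrbit d A) := closure_mono h
    _ ⊆ torusAct d A w' '' toricVariety d A :=
        hclosed.closure_subset_iff.2 (Set.image_mono subset_closure)

lemma image_toricVariety_subset_of_log_sub_mem_affSet (hA : A.Nonempty)
    {w w' : ↥A → ℝ} (hw : ∀ a, 0 < w a) (hw' : ∀ a, 0 < w' a)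
    (hμ : (fun a => Real.log (w a) - Real.log (w' a)) ∈ AffSet d A) :
    torusAct d A w '' toricVariety d A ⊆ torusAct d A w' '' toricVariety d A := by
  obtain ⟨c, hc, y, hy, hexp⟩ := exp_mem_affSet_eq_smul_toricMonomial hμ
  have hw_eq : w = c • (w' * toricMonomial d A y) :=
    funext fun a => by
      have := congrFun hexp a
      simp only [Real.exp_sub, Real.exp_log (hw a), Real.exp_log (hw' a)] at this
      rw [Pi.smul_apply, smul_eq_mul, div_eq_iff (hw' a).ne'] at this
      rw [this, Pi.smul_apply, Pi.mul_apply, smul_eq_mul]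
      ring
  exact image_toricVariety_subset_of_image_toricOrbit_subset hA hw hw'
    (image_toricOrbit_subset_of_eq_smul_mul_toricMonomial hA hc.ne' hy hw_eq)

lemma log_sub_mem_affSet_of_simplexNormalize_mem (hA : A.Nonempty)
    {w w' : ↥A → ℝ} (hw : ∀ a, 0 < w a) (hw' : ∀ a, 0 < w' a)
    (h : simplexNormalize d A w ∈ torusAct d A w' '' toricVariety d A) :
    (fun a => Real.log (w a) - Real.log (w' a)) ∈ AffSet d A := by
  obtain ⟨z, hzX, hz⟩ := h
  have hS := sum_mul_pos_of_mem_stdSimplex hw' (toricVariety_subset_stdSimplex hA hzX)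
  have hW : 0 < ∑ b, w b := sum_pos (fun b _ => hw b) (univ_nonempty_iff.2 hA.to_subtype)
  have hc : 0 < (∑ b, w' b * z b) / ∑ b, w b := div_pos hS hW
  have hz_eq := eq_smul_div_of_simplexNormalize_eq_torusAct (fun a => (hw' a).ne') hW.ne' hS.ne'
    hz.symm
  have hzpos : ∀ a, 0 < z a := fun a => by
    rw [hz_eq]
    exact mul_pos hc (div_pos (hw a) (hw' a))
  convert sub_mem_affSet (log_mem_affSet_of_mem_toricVariety hzX hzpos)
    (const_mem_affSet (Real.log ((∑ b, w' b * z b) / ∑ b, w b))) using 1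
  funext a
  rw [Pi.sub_apply, congrFun hz_eq a]
  simp only [Pi.smul_apply, Pi.div_apply, smul_eq_mul,
    Real.log_mul hc.ne' (div_pos (hw a) (hw' a)).ne', Real.log_div (hw a).ne' (hw' a).ne']
  ring

end Translates

/-- Two torus translates of `X_𝒜` coincide iff the difference of the coordinatewise
logarithms of the weights is the restriction of an affine function. -/
theorem translate_eq_iff_log_diff_affine (d : ℕ) (A : Finset (Fin d → ℝ))
    (hA : A.Nonempty) (w w' : ↥A → ℝ) (hw : ∀ a, 0 < w a) (hw' : ∀ a, 0 < w' a) :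
    torusAct d A w '' toricVariety d A = torusAct d A w' '' toricVariety d A ↔
      (fun a => Real.log (w a) - Real.log (w' a)) ∈ AffSet d A := by
  constructor
  · intro heq
    have hsum : ∑ b : ↥A, (1 : ↥A → ℝ) b ≠ 0 := by simpa using hA.ne_empty
    refine log_sub_mem_affSet_of_simplexNormalize_mem hA hw hw' (heq ▸ ⟨_,
      simplexNormalize_one_mem_toricVariety, ?_⟩)
    rw [torusAct_simplexNormalize w hsum, mul_one]
  · intro hμ
    have hμ' : (fun a => Real.log (w' a) - Real.log (w a)) ∈ AffSet d A := by
      convert neg_mem_affSet hμ using 1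
      exact funext fun a => (neg_sub _ _).symm
    exact (image_toricVariety_subset_of_log_sub_mem_affSet hA hw hw' hμ).antisymm
      (image_toricVariety_subset_of_log_sub_mem_affSet hA hw' hw hμ')
end

section
/- Let 𝒜 ⊂ ℝ^d be finite and X_𝒜 ⊂ ▵^𝒜 the closure of the image of φ_𝒜(x) = [x^a : a ∈ 𝒜]. Suppose α, β ∈ ℝ^𝒜_{≥0} satisfy Σ_a α_a a = Σ_a β_a a and Σ_a α_a = Σ_a β_a. Then every point z ∈ X_𝒜 satisfies ∏_{a∈𝒜} z_a^{α_a} = ∏_{a∈𝒜} z_a^{β_a} (with the convention 0^0 = 1, 0^t = 0 for t > 0). -/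
open Finset

/-!
On the dense part `z = φ(x) / Σ_b x^b` of `X_𝒜`, the product `∏ z_a^{γ_a}` equals
`x^{Σ γ_a a} / (Σ_b x^b)^{Σ γ_a}`, so it depends on `γ` only through the affine data
`(Σ γ_a a, Σ γ_a)`. For `γ ≥ 0` the map `z ↦ ∏ z_a^{γ_a}` is continuous on all of `ℝ^𝒜`
(nonnegative exponents make `rpow` continuous also at `0`), so the equation survives
passing to the closure.
-/

section Monomials

variable {ι κ : Type*} [Fintype ι] [Fintype κ]

theorem continuous_prod_rpow_const {γ : ι → ℝ} (hγ : ∀ i, 0 ≤ γ i) :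
    Continuous fun w : ι → ℝ => ∏ i, w i ^ γ i :=
  continuous_finsetProd _ fun i _ =>
    (continuous_apply i).rpow_const fun _ => Or.inr (hγ i)

theorem prod_div_rpow_of_nonneg {w : ι → ℝ} {c : ℝ} {γ : ι → ℝ} (hw : ∀ i, 0 ≤ w i)
    (hc : 0 ≤ c) (hγ : ∀ i, 0 ≤ γ i) :
    ∏ i, (w i / c) ^ γ i = (∏ i, w i ^ γ i) / c ^ ∑ i, γ i := by
  rw [Real.rpow_sum_of_nonneg hc fun i _ => hγ i, ← prod_div_distrib]
  exact prod_congr rfl fun i _ => Real.div_rpow (hw i) hc _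

theorem prod_prod_rpow_rpow {x : κ → ℝ} (hx : ∀ j, 0 < x j) (v : ι → κ → ℝ) (γ : ι → ℝ) :
    ∏ i, (∏ j, x j ^ v i j) ^ γ i = ∏ j, x j ^ (∑ i, γ i • v i) j := by
  calc ∏ i, (∏ j, x j ^ v i j) ^ γ i
      = ∏ i, ∏ j, x j ^ (γ i * v i j) := by
        refine prod_congr rfl fun i _ => ?_
        rw [← Real.finsetProd_rpow _ _ fun j _ => (Real.rpow_pos_of_pos (hx j) _).le]
        refine prod_congr rfl fun j _ => ?_
        rw [← Real.rpow_mul (hx j).le, mul_comm]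
    _ = ∏ j, x j ^ (∑ i, γ i • v i) j := by
        rw [prod_comm]
        refine prod_congr rfl fun j _ => ?_
        simp only [Finset.sum_apply, Pi.smul_apply, smul_eq_mul, Real.rpow_sum_of_pos (hx j)]

end Monomials

theorem toricMonomial_nonneg {d : ℕ} {A : Finset (Fin d → ℝ)} {x : Fin d → ℝ}
    (hx : ∀ j, 0 < x j) (a : ↥A) : 0 ≤ toricMonomial d A x a :=
  prod_nonneg fun j _ => (Real.rpow_pos_of_pos (hx j) _).le

theorem prod_simplexNormalize_toricMonomial_rpow {d : ℕ} {A : Finset (Fin d → ℝ)}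
    {x : Fin d → ℝ} (hx : ∀ j, 0 < x j) {γ : ↥A → ℝ} (hγ : ∀ a, 0 ≤ γ a) :
    ∏ a : ↥A, simplexNormalize d A (toricMonomial d A x) a ^ γ a
      = (∏ j, x j ^ (∑ a : ↥A, γ a • (a : Fin d → ℝ)) j)
        / (∑ b : ↥A, toricMonomial d A x b) ^ ∑ a : ↥A, γ a := by
  unfold simplexNormalize
  rw [prod_div_rpow_of_nonneg (toricMonomial_nonneg hx)
    (sum_nonneg fun b _ => toricMonomial_nonneg hx b) hγ]
  exact congrArg (· / _) (prod_prod_rpow_rpow hx (fun a : ↥A => (a : Fin d → ℝ)) γ)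

/-- Every nonnegative affine relation `Σ α_a a = Σ β_a a`, `Σ α_a = Σ β_a` among the
points of `𝒜` yields a valid binomial equation `∏ z_a^{α_a} = ∏ z_a^{β_a}` on the
real irrational toric variety `X_𝒜` (real powers, with `0^0 = 1`, `0^t = 0` for `t>0`). -/
theorem binomial_equation_of_affine_relation (d : ℕ) (A : Finset (Fin d → ℝ))
    (α β : ↥A → ℝ) (hα : ∀ a, 0 ≤ α a) (hβ : ∀ a, 0 ≤ β a)
    (hrel : (∑ a : ↥A, α a • (a : Fin d → ℝ)) = ∑ a : ↥A, β a • (a : Fin d → ℝ))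
    (hsum : (∑ a : ↥A, α a) = ∑ a : ↥A, β a)
    (z : ↥A → ℝ) (hz : z ∈ toricVariety d A) :
    (∏ a : ↥A, z a ^ α a) = ∏ a : ↥A, z a ^ β a := by
  have hclosed : IsClosed {w : ↥A → ℝ | ∏ a, w a ^ α a = ∏ a, w a ^ β a} :=
    isClosed_eq (continuous_prod_rpow_const hα) (continuous_prod_rpow_const hβ)
  refine closure_minimal ?_ hclosed hz
  rintro _ ⟨x, hx, rfl⟩
  rw [Set.mem_ofPred_eq, prod_simplexNormalize_toricMonomial_rpow hx hα,
    prod_simplexNormalize_toricMonomial_rpow hx hβ, hrel, hsum]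
end

section
/- Let 𝒜 ⊂ ℝ^d be finite, w_i ∈ ℝ^𝒜_{>0} a sequence with w_i → w in ℝ^𝒜_{>0}, and X_{𝒜,w} := w.X_𝒜 the translated real irrational toric variety. Then X_{𝒜,w_i} → X_{𝒜,w} in the Hausdorff metric on closed subsets of ▵^𝒜. -/
open Finset Filter

/-- The ℓ¹-distance on `ℝ^𝒜`. -/
noncomputable def l1dist (d : ℕ) (A : Finset (Fin d → ℝ)) (y z : ↥A → ℝ) : ℝ :=
  ∑ a : ↥A, |y a - z a|

/-- Convergence of a sequence of subsets of `▵^𝒜` to `Y` in the Hausdorff metric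
associated to the ℓ¹-distance. -/
def HausdorffTendsto (d : ℕ) (A : Finset (Fin d → ℝ)) (X : ℕ → Set (↥A → ℝ))
    (Y : Set (↥A → ℝ)) : Prop :=
  ∀ ε > (0 : ℝ), ∀ᶠ i in atTop,
    (∀ z ∈ X i, ∃ y ∈ Y, l1dist d A z y < ε) ∧
    (∀ y ∈ Y, ∃ z ∈ X i, l1dist d A z y < ε)

/-!
Normalizing to the simplex at most doubles ℓ¹-distances, measured relative to the mass of the
target. Hence `‖u.z - v.z‖₁ ≤ 2 ∑ₐ |uₐ - vₐ| / vₐ` for every `z ≥ 0`: the torus action depends on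
the weight uniformly on the nonnegative orthant, which contains `X_𝒜`. Uniformly close maps send
one set to Hausdorff-close images.
-/

lemma l1dist_comm (d : ℕ) (A : Finset (Fin d → ℝ)) (y z : ↥A → ℝ) :
    l1dist d A y z = l1dist d A z y :=
  Finset.sum_congr rfl fun _ _ => abs_sub_comm _ _

lemma hausdorffTendsto_image_of_eventually_l1dist_lt (d : ℕ) (A : Finset (Fin d → ℝ))
    {f : ℕ → (↥A → ℝ) → ↥A → ℝ} {g : (↥A → ℝ) → ↥A → ℝ} {S : Set (↥A → ℝ)}
    (h : ∀ ε > (0 : ℝ), ∀ᶠ i in atTop, ∀ z ∈ S, l1dist d A (f i z) (g z) < ε) :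
    HausdorffTendsto d A (fun i => f i '' S) (g '' S) := by
  intro ε hε
  filter_upwards [h ε hε] with i hi
  constructor
  · rintro _ ⟨z, hz, rfl⟩
    exact ⟨g z, Set.mem_image_of_mem g hz, hi z hz⟩
  · rintro _ ⟨z, hz, rfl⟩
    exact ⟨f i z, Set.mem_image_of_mem (f i) hz, l1dist_comm d A _ _ ▸ hi z hz⟩

lemma toricVariety_subset_nonneg (d : ℕ) (A : Finset (Fin d → ℝ)) :
    toricVariety d A ⊆ Set.Ici 0 := by
  refine closure_minimal ?_ isClosed_Ici
  rintro _ ⟨x, hx, rfl⟩ a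
  have hmono : 0 ≤ toricMonomial d A x := fun b =>
    Finset.prod_nonneg fun j _ => Real.rpow_nonneg (hx j).le _
  exact div_nonneg (hmono a) (Finset.sum_nonneg fun b _ => hmono b)

lemma l1dist_simplexNormalize_le (d : ℕ) (A : Finset (Fin d → ℝ)) {p q : ↥A → ℝ}
    (hp : ∀ a, 0 ≤ p a) (hq : 0 < ∑ b, q b) :
    l1dist d A (simplexNormalize d A p) (simplexNormalize d A q)
      ≤ 2 * l1dist d A p q / ∑ b, q b := by
  set S := ∑ b, p b
  set T := ∑ b, q b
  have hsum : |T - S| ≤ l1dist d A p q := by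
    rw [l1dist_comm, l1dist, ← Finset.sum_sub_distrib]
    exact Finset.abs_sum_le_sum_abs _ _
  -- the normalizing factors of `p` and `q` differ by at most `l1dist p q / T`
  have hscale : S * |1 / S - 1 / T| ≤ l1dist d A p q / T := by
    rcases eq_or_ne S 0 with hS | hS
    · rw [hS, zero_mul]
      exact div_nonneg ((abs_nonneg _).trans hsum) hq.le
    · have hS0 : 0 < S := (Finset.sum_nonneg fun b _ => hp b).lt_of_ne' hS
      calc S * |1 / S - 1 / T| = |S * (1 / S - 1 / T)| := by rw [abs_mul, abs_of_pos hS0]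
        _ = |T - S| / T := by
            rw [show S * (1 / S - 1 / T) = (T - S) / T by field_simp, abs_div, abs_of_pos hq]
        _ ≤ l1dist d A p q / T := by gcongr
  calc l1dist d A (simplexNormalize d A p) (simplexNormalize d A q)
      = ∑ a, |(p a - q a) / T + p a * (1 / S - 1 / T)| := by
        refine Finset.sum_congr rfl fun a _ => ?_
        simp only [simplexNormalize]
        congr 1
        ring
    _ ≤ ∑ a, (|p a - q a| / T + p a * |1 / S - 1 / T|) := by
        refine Finset.sum_le_sum fun a _ => (abs_add_le _ _).trans_eq ?_
        rw [abs_div, abs_of_pos hq, abs_mul, abs_of_nonneg (hp a)]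
    _ = l1dist d A p q / T + S * |1 / S - 1 / T| := by
        rw [Finset.sum_add_distrib, ← Finset.sum_div, ← Finset.sum_mul]
        rfl
    _ ≤ 2 * l1dist d A p q / T := by rw [mul_div_assoc, two_mul]; gcongr

lemma l1dist_torusAct_le (d : ℕ) (A : Finset (Fin d → ℝ)) {u v z : ↥A → ℝ}
    (hu : ∀ a, 0 ≤ u a) (hv : ∀ a, 0 < v a) (hz : ∀ a, 0 ≤ z a) :
    l1dist d A (torusAct d A u z) (torusAct d A v z) ≤ 2 * ∑ a, |u a - v a| / v a := by
  rcases (Finset.sum_nonneg fun a _ => mul_nonneg (hv a).le (hz a)).eq_or_lt with h0 | hpos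
  · have hz0 : ∀ a, z a = 0 := fun a =>
      (mul_eq_zero.mp ((Finset.sum_eq_zero_iff_of_nonneg fun b _ =>
        mul_nonneg (hv b).le (hz b)).mp h0.symm a (Finset.mem_univ a))).resolve_left (hv a).ne'
    simp only [l1dist, torusAct, simplexNormalize, hz0, mul_zero, zero_div, sub_zero, abs_zero,
      Finset.sum_const_zero]
    exact mul_nonneg zero_le_two (Finset.sum_nonneg fun a _ => div_nonneg (abs_nonneg _) (hv a).le)
  · calc l1dist d A (torusAct d A u z) (torusAct d A v z)
        ≤ 2 * l1dist d A (fun a => u a * z a) (fun a => v a * z a) / ∑ a, v a * z a :=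
          l1dist_simplexNormalize_le d A (fun a => mul_nonneg (hu a) (hz a)) hpos
      _ ≤ 2 * ∑ a, |u a - v a| / v a := by
          rw [div_le_iff₀ hpos, mul_assoc]
          gcongr
          -- each coordinate contributes its relative weight error times its mass `v a * z a`
          calc l1dist d A (fun a => u a * z a) (fun a => v a * z a)
              = ∑ a, |u a - v a| / v a * (v a * z a) := by
                refine Finset.sum_congr rfl fun a _ => ?_
                rw [← sub_mul, abs_mul, abs_of_nonneg (hz a)]
                field_simp [(hv a).ne']
            _ ≤ ∑ a, (∑ b, |u b - v b| / v b) * (v a * z a) :=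
                Finset.sum_le_sum fun a _ => mul_le_mul_of_nonneg_right
                  (Finset.single_le_sum (f := fun b => |u b - v b| / v b)
                    (fun b _ => div_nonneg (abs_nonneg _) (hv b).le) (Finset.mem_univ a))
                  (mul_nonneg (hv a).le (hz a))
            _ = (∑ a, |u a - v a| / v a) * ∑ a, v a * z a := (Finset.mul_sum _ _ _).symm

/-- If the weights `w_i ∈ ℝ^𝒜_{>0}` converge to `w ∈ ℝ^𝒜_{>0}`, then the translated
toric varieties `X_{𝒜,w_i}` converge to `X_{𝒜,w}` in the Hausdorff metric. -/
theorem translate_tendsto_of_weights_tendsto (d : ℕ) (A : Finset (Fin d → ℝ))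
    (w : ℕ → ↥A → ℝ) (hw : ∀ i a, 0 < w i a)
    (wlim : ↥A → ℝ) (hwlim : ∀ a, 0 < wlim a)
    (hconv : Tendsto w atTop (nhds wlim)) :
    HausdorffTendsto d A (fun i => torusAct d A (w i) '' toricVariety d A)
      (torusAct d A wlim '' toricVariety d A) := by
  have herr : Tendsto (fun i => ∑ a, |w i a - wlim a| / wlim a) atTop (nhds 0) := by
    have := tendsto_finsetSum Finset.univ fun a _ =>
      ((tendsto_pi_nhds.mp hconv a).sub_const (wlim a)).abs.div_const (wlim a)
    simpa using this
  refine hausdorffTendsto_image_of_eventually_l1dist_lt d A fun ε hε => ?_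
  filter_upwards [herr.eventually (gt_mem_nhds (half_pos hε))] with i hi z hz
  calc l1dist d A (torusAct d A (w i) z) (torusAct d A wlim z)
      ≤ 2 * ∑ a, |w i a - wlim a| / wlim a :=
        l1dist_torusAct_le d A (fun a => (hw i a).le) hwlim (toricVariety_subset_nonneg d A hz)
    _ < ε := by linarith
end

section
/- Let φ : ℝ^N → ℝ be a linear functional, τ ⊂ ℝ^N a polyhedral cone with φ ≤ 0 on τ, σ a face of τ with φ < 0 on the relative interior of σ, and {v_i} ⊂ τ a sequence such that for every v ∈ σ all but finitely many v_i − v lie in τ. If all but finitely many v_i lie in the relative interior of τ and φ < 0 on the relative interior of τ, then φ(v_i) → −∞. -/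
open Filter

/-! If `φ(v₀) < 0` and `v_i - t v₀` eventually lies where `φ ≤ 0`, then eventually
`φ(v_i) ≤ t φ(v₀)`, and `t φ(v₀)` is as negative as we like. For a face `σ`, the point `v₀`
comes from its relative interior, which is nonempty because `σ` is a nonempty convex set. -/

theorem tendsto_atBot_of_eventually_sub_smul_mem {E ι : Type*} [AddCommGroup E] [Module ℝ E]
    {l : Filter ι} {C : Set E} (φ : E →ₗ[ℝ] ℝ) (hφ : ∀ x ∈ C, φ x ≤ 0) {v₀ : E}
    (hv₀ : φ v₀ < 0) {v : ι → E} (hsub : ∀ t : ℝ, 0 ≤ t → ∀ᶠ i in l, v i - t • v₀ ∈ C) :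
    Tendsto (fun i => φ (v i)) l atBot := by
  rw [tendsto_atBot]
  intro b
  set t := max 0 (b / φ v₀)
  have ht : t * φ v₀ ≤ b :=
    calc t * φ v₀ ≤ b / φ v₀ * φ v₀ := mul_le_mul_of_nonpos_right (le_max_right _ _) hv₀.le
      _ = b := div_mul_cancel₀ b hv₀.ne
  filter_upwards [hsub t (le_max_left _ _)] with i hi
  have hle : φ (v i) - t * φ v₀ ≤ 0 := by simpa using hφ _ hi
  linarith

section polyFace

variable {n : ℕ} {Ψ S : Finset ((Fin n → ℝ) →ₗ[ℝ] ℝ)}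

theorem zero_mem_polyFace : (0 : Fin n → ℝ) ∈ polyFace n Ψ S :=
  ⟨fun ψ _ => by simp, fun ψ _ => by simp⟩

theorem smul_mem_polyFace {t : ℝ} (ht : 0 ≤ t) {x : Fin n → ℝ} (hx : x ∈ polyFace n Ψ S) :
    t • x ∈ polyFace n Ψ S :=
  ⟨fun ψ hψ => by simpa using mul_nonneg ht (hx.1 ψ hψ),
    fun ψ hψ => by simp [hx.2 ψ hψ]⟩

theorem convex_polyFace : Convex ℝ (polyFace n Ψ S) := by
  intro x hx y hy a b ha hb _
  refine ⟨fun ψ hψ => ?_, fun ψ hψ => ?_⟩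
  · simpa using add_nonneg (mul_nonneg ha (hx.1 ψ hψ)) (mul_nonneg hb (hy.1 ψ hψ))
  · simp [hx.2 ψ hψ, hy.2 ψ hψ]

end polyFace

theorem tendsto_atBot_of_min_face_general (N : ℕ) (φ : (Fin N → ℝ) →ₗ[ℝ] ℝ)
    (Ψ S : Finset ((Fin N → ℝ) →ₗ[ℝ] ℝ))
    (hφτ : ∀ x ∈ polyCone N Ψ, φ x ≤ 0)
    (hφσ : ∀ x ∈ intrinsicInterior ℝ (polyFace N Ψ S), φ x < 0)
    (v : ℕ → (Fin N → ℝ))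
    (hsub : ∀ v₀ ∈ polyFace N Ψ S, ∀ᶠ i in atTop, v i - v₀ ∈ polyCone N Ψ) :
    Tendsto (fun i => φ (v i)) atTop atBot := by
  obtain ⟨v₀, hv₀⟩ := (intrinsicInterior_nonempty convex_polyFace).mpr ⟨0, zero_mem_polyFace⟩
  exact tendsto_atBot_of_eventually_sub_smul_mem φ hφτ (hφσ v₀ hv₀)
    fun t ht => hsub _ (smul_mem_polyFace ht (intrinsicInterior_subset hv₀))

/-- Key analytic step: if `φ ≤ 0` on the polyhedral cone `τ`, `φ < 0` on the relative
interiors of `τ` and of a face `σ`, the sequence `{v_i} ⊂ τ` eventually satisfies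
`v_i − v ∈ τ` for every `v ∈ σ`, and all but finitely many `v_i` lie in the relative
interior of `τ`, then `φ(v_i) → −∞`. -/
theorem tendsto_atBot_of_min_face (N : ℕ) (φ : (Fin N → ℝ) →ₗ[ℝ] ℝ)
    (Ψ S : Finset ((Fin N → ℝ) →ₗ[ℝ] ℝ)) (hS : S ⊆ Ψ)
    (hφτ : ∀ x ∈ polyCone N Ψ, φ x ≤ 0)
    (hφσ : ∀ x ∈ intrinsicInterior ℝ (polyFace N Ψ S), φ x < 0)
    (v : ℕ → (Fin N → ℝ)) (hv : ∀ i, v i ∈ polyCone N Ψ)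
    (hsub : ∀ v₀ ∈ polyFace N Ψ S, ∀ᶠ i in atTop, v i - v₀ ∈ polyCone N Ψ)
    (hrelint : ∀ᶠ i in atTop, v i ∈ intrinsicInterior ℝ (polyCone N Ψ))
    (hφrelint : ∀ x ∈ intrinsicInterior ℝ (polyCone N Ψ), φ x < 0) :
    Tendsto (fun i => φ (v i)) atTop atBot :=
  tendsto_atBot_of_min_face_general N φ Ψ S hφτ hφσ v hsub
end
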